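/- arXiv:2306.01099 — 4 statements merged into one kernel-verified Lean document; each statement's English description precedes it below -/
import Mathlib

section
/- Let S : ℝ → ℝ be odd, continuous and bounded, and let (x_1,…,x_N,m_1,…,m_N) be a classical solution on [0,T̄] of the weighted Coulomb opinion dynamics system with (1/N)·∑_{i=1}^N m_i(0) = 1 and m_i(0) > 0 for every i. Then for every i and every t ∈ [0,T̄], m_i(0)·exp(−‖S‖_∞ t) ≤ m_i(t) ≤ m_i(0)·exp(‖S‖_∞ t); in particular every weight remains strictly positive on [0,T̄]. -/
open MeasureTheory Filter

noncomputable section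

/-- A classical solution (in integral form) of the weighted 1D Coulomb opinion
dynamics with interaction kernel `S`, `N` agents, on the time interval `[0, T]`.
Agents are indexed by `1, …, N`. -/
def IsCoulombSol (S : ℝ → ℝ) (N : ℕ) (T : ℝ) (x m : ℕ → ℝ → ℝ) : Prop :=
  ∀ i ∈ Finset.Icc 1 N,
    ContinuousOn (x i) (Set.Icc 0 T) ∧ ContinuousOn (m i) (Set.Icc 0 T) ∧
    (∀ t ∈ Set.Icc (0 : ℝ) T,
      x i t = x i 0 + ∫ τ in (0 : ℝ)..t,
        (1 / (N : ℝ)) * ∑ j ∈ (Finset.Icc 1 N).erase i,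
          m j τ * Real.sign (x j τ - x i τ)) ∧
    (∀ t ∈ Set.Icc (0 : ℝ) T,
      m i t = m i 0 + ∫ τ in (0 : ℝ)..t,
        (1 / (N : ℝ)) * ∑ j ∈ Finset.Icc 1 N,
          m i τ * m j τ * S (x j τ - x i τ))

/-- The shifted empirical distribution function
`F_N(t,y) = -1/2 + (1/N) ∑ m_k(t) H(y - x_k(t))`, `H` the Heaviside function. -/
def FNemp (N : ℕ) (x m : ℕ → ℝ → ℝ) (t y : ℝ) : ℝ :=
  -(1 / 2) + (1 / (N : ℝ)) * ∑ k ∈ Finset.Icc 1 N,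
    m k t * (if 0 ≤ y - x k t then (1 : ℝ) else 0)

/-- The nonlocal source operator
`𝐒[F](t,y) = F(t,y)(φ⋆F)(t,y) − ∫_{−∞}^y F(t,z)(φ'⋆F)(t,z) dz`. -/
def Ssrc (φ : ℝ → ℝ) (F : ℝ → ℝ → ℝ) (t y : ℝ) : ℝ :=
  F t y * (∫ z, φ (y - z) * F t z) -
    ∫ z in Set.Iio y, F t z * (∫ ζ, deriv φ (z - ζ) * F t ζ)

/-- The Kruzkov-type entropy inequality, for entropy level `α`, associated to the
equation `∂ₜF + ∂ₓ(A(t,F)) = 𝐒[F]` on `(0,T) × ℝ`, with `φ = S'`. -/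
def EntropyIneq (T : ℝ) (A : ℝ → ℝ → ℝ) (φ : ℝ → ℝ) (F : ℝ → ℝ → ℝ) (α : ℝ) : Prop :=
  ∀ χ : ℝ → ℝ → ℝ,
    ContDiff ℝ (⊤ : ℕ∞) (fun p : ℝ × ℝ => χ p.1 p.2) →
    HasCompactSupport (fun p : ℝ × ℝ => χ p.1 p.2) →
    (∀ t y, χ t y ≠ 0 → t ∈ Set.Ioo 0 T) →
    (∀ t y, 0 ≤ χ t y) →
    0 ≤ ∫ t in Set.Ioo 0 T, ∫ y : ℝ,
        (|F t y - α| * deriv (fun s => χ s y) t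
          + Real.sign (F t y - α) * (A t (F t y) - A t α) * deriv (fun z => χ t z) y
          + Real.sign (F t y - α) * χ t y * Ssrc φ F t y)

/-- Entropy solution of `∂ₜF + ∂ₓ(A(t,F)) = 𝐒[F]` with initial datum `F0`. -/
def IsEntropySol (T R : ℝ) (A : ℝ → ℝ → ℝ) (φ : ℝ → ℝ)
    (F : ℝ → ℝ → ℝ) (F0 : ℝ → ℝ) : Prop :=
  Measurable (fun p : ℝ × ℝ => F p.1 p.2) ∧
  (∀ t y, F t y ∈ Set.Icc (-(1 / 2) : ℝ) (1 / 2)) ∧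
  (∀ t ∈ Set.Icc (0 : ℝ) T, ∀ y, R ≤ y → F t y = 1 / 2 ∧ F t (-y) = -(1 / 2)) ∧
  (∀ t ∈ Set.Icc (0 : ℝ) T, Monotone (F t)) ∧
  (∀ g : ℝ → ℝ, ContDiff ℝ (⊤ : ℕ∞) g → HasCompactSupport g →
    Tendsto (fun t => ∫ y, F t y * g y) (nhdsWithin 0 (Set.Ioi 0))
      (nhds (∫ y, F0 y * g y))) ∧
  (∀ α : ℝ, EntropyIneq T A φ F α)

end

private lemma hasDerivAt_of_eq_integral {T : ℝ} {G f : ℝ → ℝ}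
    (hG : ContinuousOn G (Set.Icc 0 T))
    (heq : ∀ t ∈ Set.Icc (0:ℝ) T, f t = f 0 + ∫ τ in (0:ℝ)..t, G τ)
    {τ : ℝ} (hτ : τ ∈ Set.Ioo (0:ℝ) T) : HasDerivAt f (G τ) τ := by
  have hmem : Set.Icc (0:ℝ) T ∈ nhds τ := Icc_mem_nhds hτ.1 hτ.2
  have hint : IntervalIntegrable G volume 0 τ := by
    apply ContinuousOn.intervalIntegrable
    apply hG.mono
    rw [Set.uIcc_of_le hτ.1.le]
    exact Set.Icc_subset_Icc le_rfl hτ.2.le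
  have hsm : StronglyMeasurableAtFilter G (nhds τ) volume :=
    (hG.mono Set.Ioo_subset_Icc_self).stronglyMeasurableAtFilter isOpen_Ioo τ hτ
  have hca : ContinuousAt G τ := hG.continuousAt hmem
  have h1 : HasDerivAt (fun u => f 0 + ∫ s in (0:ℝ)..u, G s) (G τ) τ :=
    (intervalIntegral.integral_hasDerivAt_right hint hsm hca).const_add _
  exact h1.congr_of_eventuallyEq (Filter.eventuallyEq_of_mem hmem heq)


/-- Two–sided exponential bounds on the weights; in particular
all weights stay strictly positive on `[0, T]`.  Here `sSup (Set.range fun y => |S y|)`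
is the sup norm `‖S‖_∞` of the bounded function `S`. -/
theorem weights_exponential_bounds
    (N : ℕ) (hN : 1 ≤ N) (T : ℝ) (hT : 0 < T)
    (S : ℝ → ℝ) (hScont : Continuous S) (hSodd : ∀ y, S (-y) = -S y)
    (hSbdd : ∃ C, ∀ y, |S y| ≤ C)
    (x m : ℕ → ℝ → ℝ) (hsol : IsCoulombSol S N T x m)
    (hmass0 : (1 / (N : ℝ)) * ∑ i ∈ Finset.Icc 1 N, m i 0 = 1)
    (hm0 : ∀ i ∈ Finset.Icc 1 N, 0 < m i 0) :
    ∀ i ∈ Finset.Icc 1 N, ∀ t ∈ Set.Icc (0 : ℝ) T,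
      m i 0 * Real.exp (-(sSup (Set.range fun y => |S y|)) * t) ≤ m i t ∧
      m i t ≤ m i 0 * Real.exp ((sSup (Set.range fun y => |S y|)) * t) ∧
      0 < m i t := by
  obtain ⟨C, hC⟩ := hSbdd
  set K := sSup (Set.range fun y => |S y|) with hKdef
  have hbdd : BddAbove (Set.range fun y => |S y|) := ⟨C, by rintro _ ⟨y, rfl⟩; exact hC y⟩
  have hKle : ∀ y, |S y| ≤ K := fun y => le_csSup hbdd ⟨y, rfl⟩
  have hK0 : (0:ℝ) ≤ K := le_trans (abs_nonneg _) (hKle 0)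
  have hNpos : (0:ℝ) < N := by exact_mod_cast hN
  set G : ℕ → ℝ → ℝ := fun i τ =>
    (1 / (N : ℝ)) * ∑ j ∈ Finset.Icc 1 N, m i τ * m j τ * S (x j τ - x i τ) with hGdef
  -- continuity of the integrands
  have hGc : ∀ i ∈ Finset.Icc 1 N, ContinuousOn (G i) (Set.Icc 0 T) := by
    intro i hi
    apply ContinuousOn.mul continuousOn_const
    apply continuousOn_finset_sum
    intro j hj
    exact ((hsol i hi).2.1.mul (hsol j hj).2.1).mul
      (hScont.comp_continuousOn ((hsol j hj).1.sub (hsol i hi).1))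
  -- derivatives
  have hderiv : ∀ i ∈ Finset.Icc 1 N, ∀ τ ∈ Set.Ioo (0:ℝ) T, HasDerivAt (m i) (G i τ) τ :=
    fun i hi τ hτ => hasDerivAt_of_eq_integral (hGc i hi) (hsol i hi).2.2.2 hτ
  -- conservation of mass
  have hsum0 : ∀ τ : ℝ, ∑ i ∈ Finset.Icc 1 N, G i τ = 0 := by
    intro τ
    have hA : ∑ i ∈ Finset.Icc 1 N, ∑ j ∈ Finset.Icc 1 N,
        m i τ * m j τ * S (x j τ - x i τ) = 0 := by
      set A := ∑ i ∈ Finset.Icc 1 N, ∑ j ∈ Finset.Icc 1 N,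
        m i τ * m j τ * S (x j τ - x i τ) with hAdef
      have h1 : A = -A := by
        calc A = ∑ j ∈ Finset.Icc 1 N, ∑ i ∈ Finset.Icc 1 N,
            m i τ * m j τ * S (x j τ - x i τ) := Finset.sum_comm
        _ = ∑ j ∈ Finset.Icc 1 N, ∑ i ∈ Finset.Icc 1 N,
            -(m j τ * m i τ * S (x i τ - x j τ)) := by
          apply Finset.sum_congr rfl; intro j _; apply Finset.sum_congr rfl; intro i _
          have : x j τ - x i τ = -(x i τ - x j τ) := by ring
          rw [this, hSodd]; ring
        _ = -A := by rw [hAdef]; simp [Finset.sum_neg_distrib]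
      linarith
    simp only [hGdef, ← Finset.mul_sum]
    rw [hA, mul_zero]
  have hmass : ∀ t ∈ Set.Icc (0:ℝ) T, ∑ j ∈ Finset.Icc 1 N, m j t = N := by
    intro t ht
    have hint : ∀ j ∈ Finset.Icc 1 N, IntervalIntegrable (G j) volume 0 t := by
      intro j hj
      apply ContinuousOn.intervalIntegrable
      apply (hGc j hj).mono
      rw [Set.uIcc_of_le ht.1]
      exact Set.Icc_subset_Icc le_rfl ht.2
    have hsum0' : ∑ j ∈ Finset.Icc 1 N, m j 0 = N := by
      field_simp at hmass0; linarith [hmass0]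
    calc ∑ j ∈ Finset.Icc 1 N, m j t
        = ∑ j ∈ Finset.Icc 1 N, (m j 0 + ∫ τ in (0:ℝ)..t, G j τ) := by
          apply Finset.sum_congr rfl; intro j hj; exact (hsol j hj).2.2.2 t ht
      _ = (∑ j ∈ Finset.Icc 1 N, m j 0) + ∑ j ∈ Finset.Icc 1 N, ∫ τ in (0:ℝ)..t, G j τ := by
          rw [Finset.sum_add_distrib]
      _ = (N:ℝ) + ∫ τ in (0:ℝ)..t, ∑ j ∈ Finset.Icc 1 N, G j τ := by
          rw [hsum0', intervalIntegral.integral_finset_sum hint]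
      _ = N := by simp [hsum0]
  -- Gronwall step
  have hgron : ∀ s ∈ Set.Icc (0:ℝ) T,
      (∀ τ ∈ Set.Icc (0:ℝ) s, ∀ j ∈ Finset.Icc 1 N, 0 ≤ m j τ) →
      ∀ i ∈ Finset.Icc 1 N, ∀ t ∈ Set.Icc (0:ℝ) s,
        m i 0 * Real.exp (-K * t) ≤ m i t ∧ m i t ≤ m i 0 * Real.exp (K * t) := by
    intro s hs hpos i hi t ht
    have hsub : Set.Icc (0:ℝ) s ⊆ Set.Icc 0 T := Set.Icc_subset_Icc le_rfl hs.2
    have hGb : ∀ τ ∈ Set.Ioo (0:ℝ) s, |G i τ| ≤ K * m i τ := by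
      intro τ hτ
      have hτ' : τ ∈ Set.Icc (0:ℝ) s := Set.Ioo_subset_Icc_self hτ
      have hτT : τ ∈ Set.Icc (0:ℝ) T := hsub hτ'
      have hmi : 0 ≤ m i τ := hpos τ hτ' i hi
      have hstep : ∀ j ∈ Finset.Icc 1 N,
          |m i τ * m j τ * S (x j τ - x i τ)| ≤ m i τ * m j τ * K := by
        intro j hj
        have hmj : 0 ≤ m j τ := hpos τ hτ' j hj
        rw [abs_mul, abs_mul, abs_of_nonneg hmi, abs_of_nonneg hmj]
        exact mul_le_mul_of_nonneg_left (hKle _) (by positivity)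
      calc |G i τ| = (1/(N:ℝ)) * |∑ j ∈ Finset.Icc 1 N, m i τ * m j τ * S (x j τ - x i τ)| := by
            rw [hGdef]; rw [abs_mul, abs_of_nonneg (by positivity : (0:ℝ) ≤ 1/(N:ℝ))]
        _ ≤ (1/(N:ℝ)) * ∑ j ∈ Finset.Icc 1 N, |m i τ * m j τ * S (x j τ - x i τ)| :=
            mul_le_mul_of_nonneg_left (Finset.abs_sum_le_sum_abs _ _) (by positivity)
        _ ≤ (1/(N:ℝ)) * ∑ j ∈ Finset.Icc 1 N, m i τ * m j τ * K :=
            mul_le_mul_of_nonneg_left (Finset.sum_le_sum hstep) (by positivity)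
        _ = (1/(N:ℝ)) * ((m i τ * K) * ∑ j ∈ Finset.Icc 1 N, m j τ) := by
            rw [Finset.mul_sum, Finset.mul_sum, Finset.mul_sum]
            apply Finset.sum_congr rfl; intros; ring
        _ = K * m i τ := by rw [hmass τ hτT]; field_simp
    have hconm : ContinuousOn (m i) (Set.Icc 0 s) := (hsol i hi).2.1.mono hsub
    -- derivative of m i * exp (c * ·)
    have hder2 : ∀ c : ℝ, ∀ τ ∈ Set.Ioo (0:ℝ) s,
        HasDerivAt (fun u => m i u * Real.exp (c * u))
          (G i τ * Real.exp (c * τ) + m i τ * (Real.exp (c * τ) * c)) τ := by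
      intro c τ hτ
      have hτT : τ ∈ Set.Ioo (0:ℝ) T := ⟨hτ.1, lt_of_lt_of_le hτ.2 hs.2⟩
      have hd1 : HasDerivAt (m i) (G i τ) τ := hderiv i hi τ hτT
      have hd2 : HasDerivAt (fun u => Real.exp (c * u)) (Real.exp (c * τ) * c) τ := by
        have := ((hasDerivAt_id τ).const_mul c).exp
        simpa using this
      exact hd1.mul hd2
    -- upper bound via antitonicity of m i * exp(-K * ·)
    have hupper : m i t * Real.exp (-K * t) ≤ m i 0 := by
      have hanti : AntitoneOn (fun u => m i u * Real.exp (-K * u)) (Set.Icc 0 s) := by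
        apply antitoneOn_of_deriv_nonpos (convex_Icc 0 s)
        · exact hconm.mul (Real.continuous_exp.comp (continuous_const.mul continuous_id)).continuousOn
        · rw [interior_Icc]
          intro τ hτ
          exact (hder2 (-K) τ hτ).differentiableAt.differentiableWithinAt
        · rw [interior_Icc]
          intro τ hτ
          rw [(hder2 (-K) τ hτ).deriv]
          have h1 := (abs_le.mp (hGb τ hτ)).2
          have h2 := Real.exp_pos (-K * τ)
          nlinarith
      have := hanti (Set.left_mem_Icc.mpr (le_trans ht.1 ht.2)) ht ht.1
      simpa using this
    have hlower : m i 0 ≤ m i t * Real.exp (K * t) := by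
      have hmono : MonotoneOn (fun u => m i u * Real.exp (K * u)) (Set.Icc 0 s) := by
        apply monotoneOn_of_deriv_nonneg (convex_Icc 0 s)
        · exact hconm.mul (Real.continuous_exp.comp (continuous_const.mul continuous_id)).continuousOn
        · rw [interior_Icc]
          intro τ hτ
          exact (hder2 K τ hτ).differentiableAt.differentiableWithinAt
        · rw [interior_Icc]
          intro τ hτ
          rw [(hder2 K τ hτ).deriv]
          have h1 := (abs_le.mp (hGb τ hτ)).1
          have h2 := Real.exp_pos (K * τ)
          nlinarith
      have := hmono (Set.left_mem_Icc.mpr (le_trans ht.1 ht.2)) ht ht.1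
      simpa using this
    have hee : Real.exp (-K * t) * Real.exp (K * t) = 1 := by
      rw [← Real.exp_add]; ring_nf; exact Real.exp_zero
    constructor
    · have := mul_le_mul_of_nonneg_right hlower (Real.exp_pos (-K * t)).le
      calc m i 0 * Real.exp (-K * t) ≤ m i t * Real.exp (K * t) * Real.exp (-K * t) := this
        _ = m i t := by rw [mul_assoc, mul_comm (Real.exp (K*t)), hee, mul_one]
    · have := mul_le_mul_of_nonneg_right hupper (Real.exp_pos (K * t)).le
      calc m i t = m i t * Real.exp (-K * t) * Real.exp (K * t) := by
            rw [mul_assoc, hee, mul_one]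
        _ ≤ m i 0 * Real.exp (K * t) := this
  -- bootstrap
  set E : Set ℝ := {s | s ∈ Set.Icc (0:ℝ) T ∧
    ∀ τ ∈ Set.Icc (0:ℝ) s, ∀ j ∈ Finset.Icc 1 N, 0 < m j τ} with hEdef
  have h0E : (0:ℝ) ∈ E := by
    refine ⟨⟨le_rfl, hT.le⟩, ?_⟩
    intro τ hτ j hj
    have : τ = 0 := le_antisymm hτ.2 hτ.1
    rw [this]; exact hm0 j hj
  have hEne : E.Nonempty := ⟨0, h0E⟩
  have hEbdd : BddAbove E := ⟨T, fun s hs => hs.1.2⟩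
  set t₀ := sSup E with ht₀def
  have ht₀mem : t₀ ∈ Set.Icc (0:ℝ) T :=
    ⟨le_csSup hEbdd h0E, csSup_le hEne (fun s hs => hs.1.2)⟩
  have hlt : ∀ τ, 0 ≤ τ → τ < t₀ → ∀ j ∈ Finset.Icc 1 N, 0 < m j τ := by
    intro τ h0 hτ j hj
    obtain ⟨s, hsE, hτs⟩ := exists_lt_of_lt_csSup hEne hτ
    exact hsE.2 τ ⟨h0, hτs.le⟩ j hj
  have ht₀pos : ∀ j ∈ Finset.Icc 1 N, 0 < m j t₀ := by
    intro j hj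
    rcases eq_or_lt_of_le ht₀mem.1 with h00 | h00
    · rw [← h00]; exact hm0 j hj
    · have hlow : ∀ σ ∈ Set.Ico (0:ℝ) t₀, m j 0 * Real.exp (-K * T) ≤ m j σ := by
        intro σ hσ
        obtain ⟨s, hsE, hσs⟩ := exists_lt_of_lt_csSup hEne hσ.2
        have hb := (hgron s hsE.1 (fun τ' hτ' j' hj' => (hsE.2 τ' hτ' j' hj').le)
          j hj σ ⟨hσ.1, hσs.le⟩).1
        refine le_trans ?_ hb
        apply mul_le_mul_of_nonneg_left _ (hm0 j hj).le
        apply Real.exp_le_exp.mpr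
        have hσT : σ ≤ T := le_trans hσs.le hsE.1.2
        nlinarith
      have hcl : t₀ ∈ closure (Set.Ico (0:ℝ) t₀) := by
        rw [closure_Ico (ne_of_lt h00)]
        exact ⟨h00.le, le_rfl⟩
      have hne2 : (nhdsWithin t₀ (Set.Ico 0 t₀)).NeBot :=
        mem_closure_iff_nhdsWithin_neBot.mp hcl
      have htend : Filter.Tendsto (m j) (nhdsWithin t₀ (Set.Ico 0 t₀)) (nhds (m j t₀)) := by
        have hc : ContinuousWithinAt (m j) (Set.Icc 0 T) t₀ := (hsol j hj).2.1 t₀ ht₀mem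
        exact hc.mono_left (nhdsWithin_mono _
          (fun σ hσ => ⟨hσ.1, le_trans hσ.2.le ht₀mem.2⟩))
      have hge : m j 0 * Real.exp (-K * T) ≤ m j t₀ :=
        ge_of_tendsto htend (eventually_nhdsWithin_of_forall hlow)
      have hgt : (0:ℝ) < m j 0 * Real.exp (-K * T) := mul_pos (hm0 j hj) (Real.exp_pos _)
      linarith
  have ht₀E : t₀ ∈ E := by
    refine ⟨ht₀mem, ?_⟩
    intro τ hτ j hj
    rcases lt_or_eq_of_le hτ.2 with hlt' | heq
    · exact hlt τ hτ.1 hlt' j hj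
    · rw [heq]; exact ht₀pos j hj
  have ht₀T : t₀ = T := by
    by_contra hneq
    have ht₀lt : t₀ < T := lt_of_le_of_ne ht₀mem.2 hneq
    have hev : ∀ᶠ σ in nhdsWithin t₀ (Set.Icc 0 T), ∀ j ∈ Finset.Icc 1 N, 0 < m j σ := by
      rw [eventually_all_finset]
      intro j hj
      have hc : ContinuousWithinAt (m j) (Set.Icc 0 T) t₀ := (hsol j hj).2.1 t₀ ht₀mem
      exact hc.eventually (eventually_gt_nhds (ht₀pos j hj))
    obtain ⟨ε, hε, hball⟩ := Metric.mem_nhdsWithin_iff.mp hev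
    set s' := min (t₀ + ε/2) T with hs'def
    have hs'gt : t₀ < s' := lt_min (by linarith) ht₀lt
    have hs'E : s' ∈ E := by
      refine ⟨⟨le_trans ht₀mem.1 hs'gt.le, min_le_right _ _⟩, ?_⟩
      intro τ hτ j hj
      rcases le_or_gt τ t₀ with hle | hgt
      · exact ht₀E.2 τ ⟨hτ.1, hle⟩ j hj
      · have hτT : τ ∈ Set.Icc (0:ℝ) T := ⟨hτ.1, le_trans hτ.2 (min_le_right _ _)⟩
        have hdist : dist τ t₀ < ε := by
          rw [Real.dist_eq, abs_of_pos (by linarith : (0:ℝ) < τ - t₀)]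
          have : τ ≤ t₀ + ε/2 := le_trans hτ.2 (min_le_left _ _)
          linarith
        exact hball ⟨Metric.mem_ball.mpr hdist, hτT⟩ j hj
    exact absurd (le_csSup hEbdd hs'E) (not_le.mpr hs'gt)
  have hposall : ∀ τ ∈ Set.Icc (0:ℝ) T, ∀ j ∈ Finset.Icc 1 N, 0 < m j τ := by
    intro τ hτ j hj
    exact ht₀E.2 τ (by rw [ht₀T]; exact hτ) j hj
  intro i hi t ht
  have hb := hgron T ⟨hT.le, le_rfl⟩ (fun τ hτ j hj => (hposall τ hτ j hj).le) i hi t ht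
  exact ⟨hb.1, hb.2, hposall t ht i hi⟩
end

section
/- Let S : ℝ → ℝ be odd, continuous and bounded, and let (x_1,…,x_N,m_1,…,m_N) be a classical solution on [0,T̄] of the weighted Coulomb opinion dynamics system with m_i(0) > 0 for all i and (1/N)·∑_{i=1}^N m_i(0) = 1. Then opinions are sticky: if x_i(t_0) = x_j(t_0) for some t_0 ∈ [0,T̄] and some indices i ≠ j, then x_i(t) = x_j(t) for all t ∈ [t_0,T̄]. -/
open MeasureTheory Filter

section StickyAux

open MeasureTheory

lemma measurable_realSign : Measurable Real.sign := by
  unfold Real.sign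
  exact Measurable.ite (measurableSet_lt measurable_id measurable_const) measurable_const
    (Measurable.ite (measurableSet_lt measurable_const measurable_id) measurable_const
      measurable_const)

lemma realSign_nonneg' {z : ℝ} (h : 0 ≤ z) : 0 ≤ Real.sign z := by
  rcases h.lt_or_eq with h' | h'
  · rw [Real.sign_of_pos h']; norm_num
  · rw [← h', Real.sign_zero]

lemma realSign_nonpos' {z : ℝ} (h : z ≤ 0) : Real.sign z ≤ 0 := by
  rcases h.lt_or_eq with h' | h'
  · rw [Real.sign_of_neg h']; norm_num
  · rw [h', Real.sign_zero]

lemma abs_realSign_le_one (z : ℝ) : |Real.sign z| ≤ 1 := by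
  rcases lt_trichotomy z 0 with h | h | h
  · rw [Real.sign_of_neg h]; norm_num
  · rw [h, Real.sign_zero]; norm_num
  · rw [Real.sign_of_pos h]; norm_num

lemma realSign_mono : Monotone Real.sign := by
  intro a b hab
  rcases lt_trichotomy a 0 with ha | ha | ha
  · rw [Real.sign_of_neg ha]
    rcases lt_trichotomy b 0 with hb | hb | hb
    · rw [Real.sign_of_neg hb]
    · rw [hb, Real.sign_zero]; norm_num
    · rw [Real.sign_of_pos hb]; norm_num
  · subst ha
    rw [Real.sign_zero]
    exact realSign_nonneg' hab
  · rw [Real.sign_of_pos ha, Real.sign_of_pos (lt_of_lt_of_le ha hab)]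

/-- Masses remain (strictly) positive on `[0,T]`. -/
lemma coulomb_mass_pos
    (N : ℕ) (hN : 1 ≤ N) (T : ℝ) (hT : 0 < T)
    (S : ℝ → ℝ) (hScont : Continuous S)
    (x m : ℕ → ℝ → ℝ) (hsol : IsCoulombSol S N T x m)
    (hm0 : ∀ i ∈ Finset.Icc 1 N, 0 < m i 0)
    (Mb Cs : ℝ)
    (hMb : ∀ j ∈ Finset.Icc 1 N, ∀ t ∈ Set.Icc (0:ℝ) T, |m j t| ≤ Mb)
    (hCs : ∀ y, |S y| ≤ Cs)
    (k : ℕ) (hk : k ∈ Finset.Icc 1 N) :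
    ∀ t ∈ Set.Icc (0:ℝ) T, 0 < m k t := by
  set A := Finset.Icc 1 N with hA
  have hNne : (N:ℝ) ≠ 0 := Nat.cast_ne_zero.2 (by omega)
  have hNnn : (0:ℝ) ≤ (N:ℝ) := Nat.cast_nonneg N
  have hMb0 : 0 ≤ Mb := le_trans (abs_nonneg _) (hMb k hk 0 ⟨le_refl _, hT.le⟩)
  have hCs0 : 0 ≤ Cs := le_trans (abs_nonneg _) (hCs 0)
  set K : ℝ := Mb * Cs + 1 with hK
  have hKpos : 0 < K := by positivity
  set h : ℝ → ℝ := fun τ =>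
    (1/(N:ℝ)) * ∑ j ∈ A, m k τ * m j τ * S (x j τ - x k τ) with hh
  have hxc : ∀ r ∈ A, ContinuousOn (x r) (Set.Icc 0 T) := fun r hr => (hsol r hr).1
  have hmc : ∀ r ∈ A, ContinuousOn (m r) (Set.Icc 0 T) := fun r hr => (hsol r hr).2.1
  have hhc : ContinuousOn h (Set.Icc 0 T) := by
    apply ContinuousOn.mul continuousOn_const
    exact continuousOn_finset_sum A fun j hj =>
      ((hmc k hk).mul (hmc j hj)).mul
        (hScont.comp_continuousOn ((hxc j hj).sub (hxc k hk)))
  have hmk : ∀ t ∈ Set.Icc (0:ℝ) T, m k t = m k 0 + ∫ τ in (0:ℝ)..t, h τ :=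
    (hsol k hk).2.2.2
  have hbound : ∀ τ ∈ Set.Icc (0:ℝ) T, |h τ| ≤ K * |m k τ| := by
    intro τ hτ
    have h1 : |∑ j ∈ A, m k τ * m j τ * S (x j τ - x k τ)|
        ≤ ∑ _j ∈ A, |m k τ| * Mb * Cs := by
      refine (Finset.abs_sum_le_sum_abs _ _).trans (Finset.sum_le_sum fun j hj => ?_)
      rw [abs_mul, abs_mul]
      have h2 := hMb j hj τ hτ
      have h3 := hCs (x j τ - x k τ)
      have h4 : (0:ℝ) ≤ |m k τ| := abs_nonneg _
      have h6 : (0:ℝ) ≤ |S (x j τ - x k τ)| := abs_nonneg _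
      have h7 : |m j τ| * |S (x j τ - x k τ)| ≤ Mb * Cs := mul_le_mul h2 h3 h6 hMb0
      calc |m k τ| * |m j τ| * |S (x j τ - x k τ)|
          = |m k τ| * (|m j τ| * |S (x j τ - x k τ)|) := by ring
        _ ≤ |m k τ| * (Mb * Cs) := mul_le_mul_of_nonneg_left h7 h4
        _ = |m k τ| * Mb * Cs := by ring
    have h2 : (∑ _j ∈ A, |m k τ| * Mb * Cs) = (N:ℝ) * (|m k τ| * Mb * Cs) := by
      rw [Finset.sum_const, nsmul_eq_mul]
      congr 1
      rw [hA]
      simp [Nat.card_Icc]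
    have h7 : |h τ| = (1/(N:ℝ)) * |∑ j ∈ A, m k τ * m j τ * S (x j τ - x k τ)| := by
      rw [hh, abs_mul, abs_of_nonneg (by positivity : (0:ℝ) ≤ 1/(N:ℝ))]
    rw [h7]
    have h8 : (1/(N:ℝ)) * |∑ j ∈ A, m k τ * m j τ * S (x j τ - x k τ)|
        ≤ (1/(N:ℝ)) * ((N:ℝ) * (|m k τ| * Mb * Cs)) := by
      rw [← h2]
      exact mul_le_mul_of_nonneg_left h1 (by positivity)
    have h9 : (1/(N:ℝ)) * ((N:ℝ) * (|m k τ| * Mb * Cs)) = Mb * Cs * |m k τ| := by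
      field_simp
    have h10 : Mb * Cs * |m k τ| ≤ K * |m k τ| := by
      have := abs_nonneg (m k τ)
      nlinarith
    exact h8.trans (h9.le.trans h10)
  by_contra hcon
  push_neg at hcon
  obtain ⟨t1, ht1, hle⟩ := hcon
  set Z : Set ℝ := Set.Icc 0 T ∩ (m k) ⁻¹' Set.Iic 0 with hZ
  have hZclosed : IsClosed Z :=
    (hmc k hk).preimage_isClosed_of_isClosed isClosed_Icc isClosed_Iic
  have hZne : Z.Nonempty := ⟨t1, ht1, hle⟩
  have hZbdd : BddBelow Z := ⟨0, fun z hz => hz.1.1⟩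
  set ts := sInf Z with hts
  have htsZ : ts ∈ Z := hZclosed.csInf_mem hZne hZbdd
  have htsIcc : ts ∈ Set.Icc (0:ℝ) T := htsZ.1
  have hts0 : 0 < ts := by
    rcases htsIcc.1.lt_or_eq with h' | h'
    · exact h'
    · exfalso
      have h2 := htsZ.2
      rw [← h'] at h2
      exact absurd (hm0 k hk) (not_lt.2 h2)
  have hpos_before : ∀ u, 0 ≤ u → u < ts → 0 < m k u := by
    intro u hu0 huts
    by_contra hc
    push_neg at hc
    have huZ : u ∈ Z := ⟨⟨hu0, le_trans huts.le htsIcc.2⟩, hc⟩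
    exact absurd (csInf_le hZbdd huZ) (not_le.2 huts)
  have hsubIcc : Set.Icc (ts - min ts (1/(2*K))) ts ⊆ Set.Icc (0:ℝ) T := by
    intro z hz
    constructor
    · have : min ts (1/(2*K)) ≤ ts := min_le_left _ _
      linarith [hz.1]
    · linarith [hz.2, htsIcc.2]
  have hmts0 : m k ts = 0 := by
    refine le_antisymm htsZ.2 ?_
    by_contra hneg
    push_neg at hneg
    have hu : 0 < m k (ts/2) := hpos_before (ts/2) (by positivity) (by linarith)
    have hsub2 : Set.Icc (ts/2) ts ⊆ Set.Icc (0:ℝ) T := fun z hz =>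
      ⟨le_trans (by positivity) hz.1, le_trans hz.2 htsIcc.2⟩
    have hiv := intermediate_value_Icc' (by linarith : ts/2 ≤ ts) ((hmc k hk).mono hsub2)
    have h0mem : (0:ℝ) ∈ Set.Icc (m k ts) (m k (ts/2)) := ⟨hneg.le, hu.le⟩
    obtain ⟨c, hc, hc0⟩ := hiv h0mem
    have hcZ : c ∈ Z := ⟨hsub2 hc, le_of_eq hc0⟩
    have h1 : ts ≤ c := csInf_le hZbdd hcZ
    have hcts : c = ts := le_antisymm hc.2 h1
    rw [hcts] at hc0
    rw [hc0] at hneg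
    exact lt_irrefl 0 hneg
  have hint : ∀ a b : ℝ, a ∈ Set.Icc (0:ℝ) T → b ∈ Set.Icc (0:ℝ) T →
      IntervalIntegrable h volume a b := by
    intro a b ha hb
    apply ContinuousOn.intervalIntegrable
    apply hhc.mono
    exact Set.uIcc_subset_Icc ha hb
  set d := min ts (1/(2*K)) with hd
  have hd0 : 0 < d := lt_min hts0 (by positivity)
  set s0 := ts - d with hs0
  have hs00 : 0 ≤ s0 := by
    have : d ≤ ts := min_le_left _ _
    simp only [hs0]
    linarith
  have hs0lt : s0 < ts := by simp only [hs0]; linarith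
  have hKd : K * d ≤ 1/2 := by
    have h1 : d ≤ 1/(2*K) := min_le_right _ _
    have h2 : K * d ≤ K * (1/(2*K)) := mul_le_mul_of_nonneg_left h1 hKpos.le
    have h3 : K * (1/(2*K)) = 1/2 := by field_simp; try ring
    linarith
  have hsubIcc' : Set.Icc s0 ts ⊆ Set.Icc (0:ℝ) T := hsubIcc
  obtain ⟨u0, hu0mem, hu0max⟩ :=
    (isCompact_Icc : IsCompact (Set.Icc s0 ts)).exists_isMaxOn
      (Set.nonempty_Icc.2 hs0lt.le)
      (continuous_abs.comp_continuousOn ((hmc k hk).mono hsubIcc'))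
  have hu0max' : ∀ u ∈ Set.Icc s0 ts, |m k u| ≤ |m k u0| := fun u hu =>
    isMaxOn_iff.1 hu0max u hu
  set Ms := |m k u0| with hMs
  have hMs0 : 0 ≤ Ms := abs_nonneg _
  have hest : ∀ u ∈ Set.Icc s0 ts, |m k u| ≤ K * Ms * (ts - u) := by
    intro u hu
    have huT : u ∈ Set.Icc (0:ℝ) T := hsubIcc' hu
    have hid : m k ts - m k u = ∫ τ in u..ts, h τ := by
      rw [hmk ts htsIcc, hmk u huT, add_sub_add_left_eq_sub]
      exact intervalIntegral.integral_interval_sub_left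
        (hint 0 ts ⟨le_refl _, hT.le⟩ htsIcc) (hint 0 u ⟨le_refl _, hT.le⟩ huT)
    rw [hmts0, zero_sub] at hid
    have habs : |m k u| = ‖∫ τ in u..ts, h τ‖ := by
      rw [← hid, Real.norm_eq_abs, abs_neg]
    rw [habs]
    have hb2 : ∀ z ∈ Set.uIoc u ts, ‖h z‖ ≤ K * Ms := by
      intro z hz
      rw [Set.uIoc_of_le hu.2] at hz
      have hzI : z ∈ Set.Icc s0 ts := ⟨le_trans hu.1 hz.1.le, hz.2⟩
      have h1 := hbound z (hsubIcc' hzI)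
      rw [Real.norm_eq_abs]
      refine le_trans h1 ?_
      exact mul_le_mul_of_nonneg_left (hu0max' z hzI) hKpos.le
    have := intervalIntegral.norm_integral_le_of_norm_le_const hb2
    rwa [abs_of_nonneg (by linarith [hu.2] : (0:ℝ) ≤ ts - u)] at this
  have h1 : Ms ≤ K * Ms * (ts - u0) := hest u0 hu0mem
  have h2 : K * Ms * (ts - u0) ≤ Ms / 2 := by
    have hts_u0 : ts - u0 ≤ d := by
      have := hu0mem.1
      simp only [hs0] at this
      linarith
    have h3 : ts - u0 ≥ 0 := by linarith [hu0mem.2]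
    have h4 := mul_le_mul_of_nonneg_left hts_u0 (mul_nonneg hKpos.le hMs0)
    have h5 := mul_le_mul_of_nonneg_left hKd hMs0
    nlinarith [h4, h5]
  have hMs_zero : Ms = 0 := by nlinarith [h1.trans h2]
  have hpos_s0 := hpos_before s0 hs00 hs0lt
  have habs : |m k s0| ≤ Ms := hu0max' s0 ⟨le_refl s0, hs0lt.le⟩
  rw [hMs_zero] at habs
  have := le_abs_self (m k s0)
  linarith

/-- If two opinions coincide at `t0`, agent `p` cannot be strictly above agent `q`
at a later time `t1`. -/
lemma coulomb_no_crossing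
    (N : ℕ) (hN : 1 ≤ N) (T : ℝ) (hT : 0 < T)
    (S : ℝ → ℝ) (x m : ℕ → ℝ → ℝ) (hsol : IsCoulombSol S N T x m)
    (hmpos : ∀ k ∈ Finset.Icc 1 N, ∀ t ∈ Set.Icc (0:ℝ) T, 0 ≤ m k t)
    (Mb : ℝ) (hMb : ∀ j ∈ Finset.Icc 1 N, ∀ t ∈ Set.Icc (0:ℝ) T, |m j t| ≤ Mb)
    (p q : ℕ) (hp : p ∈ Finset.Icc 1 N) (hq : q ∈ Finset.Icc 1 N) (hpq : p ≠ q)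
    (t0 : ℝ) (ht0 : t0 ∈ Set.Icc (0:ℝ) T) (hcol : x p t0 = x q t0)
    (t1 : ℝ) (ht1 : t1 ∈ Set.Icc t0 T) : ¬ (x q t1 < x p t1) := by
  intro hgt
  set A := Finset.Icc 1 N with hA
  have hNne : (N:ℝ) ≠ 0 := Nat.cast_ne_zero.2 (by omega)
  have hMb0 : 0 ≤ Mb := le_trans (abs_nonneg _) (hMb p hp 0 ⟨le_refl _, hT.le⟩)
  have hxc : ∀ r ∈ A, ContinuousOn (x r) (Set.Icc 0 T) := fun r hr => (hsol r hr).1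
  have hmc : ∀ r ∈ A, ContinuousOn (m r) (Set.Icc 0 T) := fun r hr => (hsol r hr).2.1
  have ht1T : t1 ∈ Set.Icc (0:ℝ) T := ⟨le_trans ht0.1 ht1.1, ht1.2⟩
  have hsub01 : Set.Icc t0 t1 ⊆ Set.Icc (0:ℝ) T := fun z hz =>
    ⟨le_trans ht0.1 hz.1, le_trans hz.2 ht1T.2⟩
  set g : ℝ → ℝ := fun t => x p t - x q t with hg
  have hgc : ContinuousOn g (Set.Icc 0 T) := (hxc p hp).sub (hxc q hq)
  set Z : Set ℝ := Set.Icc t0 t1 ∩ g ⁻¹' {0} with hZ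
  have hZclosed : IsClosed Z :=
    (hgc.mono hsub01).preimage_isClosed_of_isClosed isClosed_Icc isClosed_singleton
  have hZne : Z.Nonempty := ⟨t0, ⟨le_refl _, ht1.1⟩, by
    simp only [Set.mem_preimage, Set.mem_singleton_iff, hg, sub_eq_zero]
    exact hcol⟩
  have hZbdd : BddAbove Z := ⟨t1, fun z hz => hz.1.2⟩
  set s := sSup Z with hs
  have hsZ : s ∈ Z := hZclosed.csSup_mem hZne hZbdd
  have hgs : x p s = x q s := by
    have := hsZ.2
    simpa [hg, sub_eq_zero] using this
  have hsT : s ∈ Set.Icc (0:ℝ) T := hsub01 hsZ.1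
  have hst1 : s < t1 := by
    rcases hsZ.1.2.lt_or_eq with h' | h'
    · exact h'
    · exfalso
      rw [h'] at hgs
      rw [hgs] at hgt
      exact lt_irrefl _ hgt
  have hgpos : ∀ u, u ∈ Set.Ioc s t1 → x q u < x p u := by
    intro u hu
    have huI : u ∈ Set.Icc t0 t1 := ⟨le_trans hsZ.1.1 hu.1.le, hu.2⟩
    rcases lt_trichotomy (x p u) (x q u) with hlt | heq | hgtu
    · exfalso
      have hsubu : Set.Icc u t1 ⊆ Set.Icc (0:ℝ) T := fun z hz =>
        ⟨le_trans (hsub01 huI).1 hz.1, le_trans hz.2 ht1T.2⟩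
      have hiv := intermediate_value_Icc hu.2 (hgc.mono hsubu)
      have h0mem : (0:ℝ) ∈ Set.Icc (g u) (g t1) :=
        ⟨by simp [hg]; linarith, by simp [hg]; linarith⟩
      obtain ⟨c, hc, hc0⟩ := hiv h0mem
      have hcZ : c ∈ Z := ⟨⟨le_trans huI.1 hc.1, hc.2⟩, hc0⟩
      have : c ≤ s := le_csSup hZbdd hcZ
      have : u ≤ s := le_trans hc.1 this
      exact absurd hu.1 (not_lt.2 this)
    · exfalso
      have huZ : u ∈ Z := ⟨huI, by simp [hg, sub_eq_zero, heq]⟩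
      exact absurd hu.1 (not_lt.2 (le_csSup hZbdd huZ))
    · exact hgtu
  have hnn : ∀ u ∈ Set.Icc s t1, x q u ≤ x p u := by
    intro u hu
    rcases hu.1.lt_or_eq with h' | h'
    · exact (hgpos u ⟨h', hu.2⟩).le
    · rw [← h', hgs]
  have hsubst1 : Set.Icc s t1 ⊆ Set.Icc (0:ℝ) T := fun z hz =>
    ⟨le_trans hsT.1 hz.1, le_trans hz.2 ht1T.2⟩
  -- interval integrability of the opinion drift
  have hIccMeas : MeasurableSet (Set.Icc (0:ℝ) T) := measurableSet_Icc
  have hintOn : ∀ r ∈ A, MeasureTheory.IntegrableOn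
      (fun τ => (1/(N:ℝ)) * ∑ k ∈ A.erase r, m k τ * Real.sign (x k τ - x r τ))
      (Set.Icc 0 T) volume := by
    intro r hr
    have hmeas : AEMeasurable
        (fun τ => (1/(N:ℝ)) * ∑ k ∈ A.erase r, m k τ * Real.sign (x k τ - x r τ))
        (volume.restrict (Set.Icc (0:ℝ) T)) := by
      apply AEMeasurable.const_mul
      apply Finset.aemeasurable_fun_sum
      intro k hk'
      have hkA : k ∈ A := Finset.mem_of_mem_erase hk'
      exact ((hmc k hkA).aemeasurable hIccMeas).mul
        (measurable_realSign.comp_aemeasurable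
          (((hxc k hkA).sub (hxc r hr)).aemeasurable hIccMeas))
    refine MeasureTheory.Integrable.mono' (g := fun _ => Mb)
      (MeasureTheory.integrableOn_const measure_Icc_lt_top.ne)
      hmeas.aestronglyMeasurable ?_
    refine (MeasureTheory.ae_restrict_mem hIccMeas).mono fun τ hτ => ?_
    rw [Real.norm_eq_abs]
    have h1 : |∑ k ∈ A.erase r, m k τ * Real.sign (x k τ - x r τ)|
        ≤ ∑ _k ∈ A.erase r, Mb := by
      refine (Finset.abs_sum_le_sum_abs _ _).trans (Finset.sum_le_sum fun k hk' => ?_)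
      have hkA : k ∈ A := Finset.mem_of_mem_erase hk'
      rw [abs_mul]
      calc |m k τ| * |Real.sign (x k τ - x r τ)| ≤ Mb * 1 :=
            mul_le_mul (hMb k hkA τ hτ) (abs_realSign_le_one _) (abs_nonneg _) hMb0
        _ = Mb := mul_one Mb
    have h2 : (∑ _k ∈ A.erase r, Mb) ≤ (N:ℝ) * Mb := by
      rw [Finset.sum_const, nsmul_eq_mul]
      have hcard : ((A.erase r).card : ℝ) ≤ (N:ℝ) := by
        have h3 : (A.erase r).card ≤ A.card := Finset.card_erase_le
        have h4 : A.card = N := by rw [hA, Nat.card_Icc]; omega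
        exact_mod_cast h3.trans_eq h4
      exact mul_le_mul_of_nonneg_right hcard hMb0
    have h5 : |(1/(N:ℝ))| = 1/(N:ℝ) := abs_of_nonneg (by positivity)
    calc |(1/(N:ℝ)) * ∑ k ∈ A.erase r, m k τ * Real.sign (x k τ - x r τ)|
        = (1/(N:ℝ)) * |∑ k ∈ A.erase r, m k τ * Real.sign (x k τ - x r τ)| := by
          rw [abs_mul, h5]
      _ ≤ (1/(N:ℝ)) * ((N:ℝ) * Mb) :=
          mul_le_mul_of_nonneg_left (h1.trans h2) (by positivity)
      _ = Mb := by field_simp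
  have hII : ∀ r ∈ A, ∀ a b : ℝ, a ∈ Set.Icc (0:ℝ) T → b ∈ Set.Icc (0:ℝ) T →
      IntervalIntegrable
        (fun τ => (1/(N:ℝ)) * ∑ k ∈ A.erase r, m k τ * Real.sign (x k τ - x r τ))
        volume a b := by
    intro r hr a b ha hb
    exact ((hintOn r hr).mono_set (Set.uIcc_subset_Icc ha hb)).intervalIntegrable
  have h0T : (0:ℝ) ∈ Set.Icc (0:ℝ) T := ⟨le_refl _, hT.le⟩
  -- integral identities
  have hxpid : x p t1 - x p s = ∫ τ in s..t1,
      (1/(N:ℝ)) * ∑ k ∈ A.erase p, m k τ * Real.sign (x k τ - x p τ) := by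
    rw [(hsol p hp).2.2.1 t1 ht1T, (hsol p hp).2.2.1 s hsT, add_sub_add_left_eq_sub]
    exact intervalIntegral.integral_interval_sub_left
      (hII p hp 0 t1 h0T ht1T) (hII p hp 0 s h0T hsT)
  have hxqid : x q t1 - x q s = ∫ τ in s..t1,
      (1/(N:ℝ)) * ∑ k ∈ A.erase q, m k τ * Real.sign (x k τ - x q τ) := by
    rw [(hsol q hq).2.2.1 t1 ht1T, (hsol q hq).2.2.1 s hsT, add_sub_add_left_eq_sub]
    exact intervalIntegral.integral_interval_sub_left
      (hII q hq 0 t1 h0T ht1T) (hII q hq 0 s h0T hsT)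
  have hdiff : x p t1 - x q t1 = ∫ τ in s..t1,
      ((1/(N:ℝ)) * ∑ k ∈ A.erase p, m k τ * Real.sign (x k τ - x p τ)
        - (1/(N:ℝ)) * ∑ k ∈ A.erase q, m k τ * Real.sign (x k τ - x q τ)) := by
    rw [intervalIntegral.integral_sub (hII p hp s t1 hsT ht1T) (hII q hq s t1 hsT ht1T),
      ← hxpid, ← hxqid, hgs]
    ring
  -- pointwise nonpositivity of the integrand
  have hptw : ∀ τ ∈ Set.Icc s t1,
      (1/(N:ℝ)) * ∑ k ∈ A.erase p, m k τ * Real.sign (x k τ - x p τ)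
        - (1/(N:ℝ)) * ∑ k ∈ A.erase q, m k τ * Real.sign (x k τ - x q τ) ≤ 0 := by
    intro τ hτ
    have hτT : τ ∈ Set.Icc (0:ℝ) T := hsubst1 hτ
    have hqp : x q τ ≤ x p τ := hnn τ hτ
    have hqmem : q ∈ A.erase p := Finset.mem_erase.2 ⟨Ne.symm hpq, hq⟩
    have hpmem : p ∈ A.erase q := Finset.mem_erase.2 ⟨hpq, hp⟩
    have e1 : ∑ k ∈ A.erase p, m k τ * Real.sign (x k τ - x p τ)
        = (∑ k ∈ (A.erase p).erase q, m k τ * Real.sign (x k τ - x p τ))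
          + m q τ * Real.sign (x q τ - x p τ) :=
      (Finset.sum_erase_add _ _ hqmem).symm
    have e2 : ∑ k ∈ A.erase q, m k τ * Real.sign (x k τ - x q τ)
        = (∑ k ∈ (A.erase p).erase q, m k τ * Real.sign (x k τ - x q τ))
          + m p τ * Real.sign (x p τ - x q τ) := by
      rw [Finset.erase_right_comm (a := p) (b := q)]
      exact (Finset.sum_erase_add _ _ hpmem).symm
    have hEsum : ∑ k ∈ (A.erase p).erase q,
        (m k τ * Real.sign (x k τ - x p τ) - m k τ * Real.sign (x k τ - x q τ)) ≤ 0 := by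
      refine Finset.sum_nonpos fun k hkE => ?_
      have hkA : k ∈ A := Finset.mem_of_mem_erase (Finset.mem_of_mem_erase hkE)
      have hmk := hmpos k hkA τ hτT
      have hsgn := realSign_mono (by linarith : x k τ - x p τ ≤ x k τ - x q τ)
      nlinarith [mul_le_mul_of_nonneg_left hsgn hmk]
    have hFq : m q τ * Real.sign (x q τ - x p τ) ≤ 0 :=
      mul_nonpos_iff.2 (Or.inl ⟨hmpos q hq τ hτT, realSign_nonpos' (by linarith)⟩)
    have hGp : 0 ≤ m p τ * Real.sign (x p τ - x q τ) :=
      mul_nonneg (hmpos p hp τ hτT) (realSign_nonneg' (by linarith))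
    have hkey : (1/(N:ℝ)) * ∑ k ∈ A.erase p, m k τ * Real.sign (x k τ - x p τ)
        - (1/(N:ℝ)) * ∑ k ∈ A.erase q, m k τ * Real.sign (x k τ - x q τ)
        = (1/(N:ℝ)) * ((∑ k ∈ (A.erase p).erase q,
            (m k τ * Real.sign (x k τ - x p τ) - m k τ * Real.sign (x k τ - x q τ)))
          + m q τ * Real.sign (x q τ - x p τ) - m p τ * Real.sign (x p τ - x q τ)) := by
      rw [e1, e2, Finset.sum_sub_distrib]
      ring
    rw [hkey]
    exact mul_nonpos_iff.2 (Or.inl ⟨by positivity, by linarith⟩)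
  -- conclude
  have hneg : (∫ τ in s..t1,
      ((1/(N:ℝ)) * ∑ k ∈ A.erase p, m k τ * Real.sign (x k τ - x p τ)
        - (1/(N:ℝ)) * ∑ k ∈ A.erase q, m k τ * Real.sign (x k τ - x q τ))) ≤ 0 := by
    have h1 := intervalIntegral.integral_mono_on (μ := volume) hst1.le
      ((hII p hp s t1 hsT ht1T).sub (hII q hq s t1 hsT ht1T))
      (intervalIntegrable_const (c := (0:ℝ)))
      hptw
    simpa using h1
  rw [← hdiff] at hneg
  linarith

end StickyAux

/-- Sticky opinions: once two opinions collide they remain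
equal for all later times in `[0, T]`. -/
theorem sticky_opinions
    (N : ℕ) (hN : 1 ≤ N) (T : ℝ) (hT : 0 < T)
    (S : ℝ → ℝ) (hScont : Continuous S) (hSodd : ∀ y, S (-y) = -S y)
    (hSbdd : ∃ C, ∀ y, |S y| ≤ C)
    (x m : ℕ → ℝ → ℝ) (hsol : IsCoulombSol S N T x m)
    (hm0 : ∀ i ∈ Finset.Icc 1 N, 0 < m i 0)
    (hmass0 : (1 / (N : ℝ)) * ∑ i ∈ Finset.Icc 1 N, m i 0 = 1)
    (i j : ℕ) (hi : i ∈ Finset.Icc 1 N) (hj : j ∈ Finset.Icc 1 N) (hij : i ≠ j)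
    (t0 : ℝ) (ht0 : t0 ∈ Set.Icc (0 : ℝ) T) (hcol : x i t0 = x j t0) :
    ∀ t ∈ Set.Icc t0 T, x i t = x j t := by
  intro t ht
  by_contra hne
  set A := Finset.Icc 1 N with hA
  have hAne : A.Nonempty := ⟨1, Finset.mem_Icc.2 ⟨le_refl 1, hN⟩⟩
  have hbnds : ∀ k : ℕ, ∃ c : ℝ, ∀ t' ∈ Set.Icc (0:ℝ) T, k ∈ A → |m k t'| ≤ c := by
    intro k
    by_cases hk : k ∈ A
    · obtain ⟨c, hc⟩ :=
        (isCompact_Icc (a := (0:ℝ)) (b := T)).exists_bound_of_continuousOn (hsol k hk).2.1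
      exact ⟨c, fun t' ht' _ => by simpa [Real.norm_eq_abs] using hc t' ht'⟩
    · exact ⟨0, fun t' _ hk' => absurd hk' hk⟩
  choose c hc using hbnds
  have hMb : ∀ k ∈ A, ∀ t' ∈ Set.Icc (0:ℝ) T, |m k t'| ≤ A.sup' hAne c :=
    fun k hk t' ht' => le_trans (hc k t' ht' hk) (Finset.le_sup' c hk)
  obtain ⟨Cs, hCs⟩ := hSbdd
  have hmpos : ∀ k ∈ A, ∀ t' ∈ Set.Icc (0:ℝ) T, 0 ≤ m k t' := fun k hk t' ht' =>
    (coulomb_mass_pos N hN T hT S hScont x m hsol hm0 _ Cs hMb hCs k hk t' ht').le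
  rcases lt_or_gt_of_ne hne with hlt | hgt
  · exact coulomb_no_crossing N hN T hT S x m hsol hmpos _ hMb j i hj hi
      (Ne.symm hij) t0 ht0 hcol.symm t ht hlt
  · exact coulomb_no_crossing N hN T hT S x m hsol hmpos _ hMb i j hi hj
      hij t0 ht0 hcol t ht hgt
end

section
/- Let S : ℝ → ℝ be odd, continuous and bounded, and let (x_1,…,x_N,m_1,…,m_N) be a classical solution on [0,T] of the weighted Coulomb opinion dynamics system with m_i(0) > 0 for all i, (1/N)·∑_{i=1}^N m_i(0) = 1, and |x_i(0)| ≤ X̄ for all i. Then there exists a constant c > 0, depending only on ‖S‖_∞, X̄ and T (and not on N), such that for all s, t ∈ [0,T], ∫_ℝ |F_N(t,x) − F_N(s,x)| dx ≤ c·|t − s|. -/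
open MeasureTheory Filter

namespace CoulombAux

open MeasureTheory Set intervalIntegral

lemma measurable_realSign : Measurable Real.sign := by
  have h : Real.sign = fun r : ℝ => if r < 0 then (-1:ℝ) else if 0 < r then 1 else 0 := rfl
  rw [h]
  exact Measurable.ite (measurableSet_lt measurable_id measurable_const) measurable_const
    (Measurable.ite (measurableSet_lt measurable_const measurable_id) measurable_const
      measurable_const)

lemma abs_realSign_le (y : ℝ) : |Real.sign y| ≤ 1 := by
  rcases Real.sign_apply_eq y with h | h | h <;> rw [h] <;> norm_num

lemma antisym_double_sum (F : Finset ℕ) (f : ℕ → ℕ → ℝ) (h : ∀ i j, f i j = - f j i) :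
    ∑ i ∈ F, ∑ j ∈ F, f i j = 0 := by
  have h2 : (∑ i ∈ F, ∑ j ∈ F, f i j) + (∑ i ∈ F, ∑ j ∈ F, f i j) = 0 := by
    nth_rewrite 2 [Finset.sum_comm]
    rw [← Finset.sum_add_distrib]
    refine Finset.sum_eq_zero fun i _ => ?_
    rw [← Finset.sum_add_distrib]
    exact Finset.sum_eq_zero fun j _ => by rw [h i j]; ring
  linarith

lemma abs_Hdiff (a b y : ℝ) :
    |(if 0 ≤ y - a then (1:ℝ) else 0) - (if 0 ≤ y - b then (1:ℝ) else 0)|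
      = Set.indicator (Set.Ico (a ⊓ b) (a ⊔ b)) (fun _ => (1:ℝ)) y := by
  rcases le_total a b with hab | hab
  · rw [inf_eq_left.mpr hab, sup_eq_right.mpr hab, Set.indicator_apply]
    simp only [Set.mem_Ico]
    split_ifs with h1 h2 h3 h3 h2 h3 h3 <;>
      first
      | (exfalso; exact h3 ⟨by linarith, by linarith⟩)
      | (exfalso; obtain ⟨h3a, h3b⟩ := h3; linarith)
      | norm_num
  · rw [inf_eq_right.mpr hab, sup_eq_left.mpr hab, Set.indicator_apply]
    simp only [Set.mem_Ico]
    split_ifs with h1 h2 h3 h3 h2 h3 h3 <;>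
      first
      | (exfalso; exact h3 ⟨by linarith, by linarith⟩)
      | (exfalso; obtain ⟨h3a, h3b⟩ := h3; linarith)
      | norm_num

variable {S : ℝ → ℝ} {N : ℕ} {T Ms : ℝ} {x m : ℕ → ℝ → ℝ}

/-- The integrand of the weight equation. -/
noncomputable def Gi (S : ℝ → ℝ) (N : ℕ) (x m : ℕ → ℝ → ℝ) (i : ℕ) (τ : ℝ) : ℝ :=
  (1 / (N : ℝ)) * ∑ j ∈ Finset.Icc 1 N, m i τ * m j τ * S (x j τ - x i τ)

lemma m_eq (hsol : IsCoulombSol S N T x m) {i : ℕ} (hi : i ∈ Finset.Icc 1 N) :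
    ∀ t ∈ Set.Icc (0:ℝ) T, m i t = m i 0 + ∫ τ in (0:ℝ)..t, Gi S N x m i τ :=
  (hsol i hi).2.2.2

lemma Gi_contOn (hS : Continuous S) (hsol : IsCoulombSol S N T x m)
    {i : ℕ} (hi : i ∈ Finset.Icc 1 N) :
    ContinuousOn (Gi S N x m i) (Set.Icc 0 T) := by
  refine continuousOn_const.mul (continuousOn_finset_sum _ fun j hj => ?_)
  exact ((hsol i hi).2.1.mul (hsol j hj).2.1).mul
    (hS.comp_continuousOn ((hsol j hj).1.sub (hsol i hi).1))

lemma Gi_intInt (hS : Continuous S) (hsol : IsCoulombSol S N T x m)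
    {i : ℕ} (hi : i ∈ Finset.Icc 1 N) {a b : ℝ} (ha : a ∈ Set.Icc (0:ℝ) T)
    (hb : b ∈ Set.Icc (0:ℝ) T) :
    IntervalIntegrable (Gi S N x m i) volume a b :=
  ((Gi_contOn hS hsol hi).mono (Set.uIcc_subset_Icc ha hb)).intervalIntegrable

lemma mass_conserved (hS : Continuous S) (hodd : ∀ y, S (-y) = -S y)
    (hsol : IsCoulombSol S N T x m) :
    ∀ t ∈ Set.Icc (0:ℝ) T, ∑ i ∈ Finset.Icc 1 N, m i t = ∑ i ∈ Finset.Icc 1 N, m i 0 := by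
  intro t ht
  have h0T : (0:ℝ) ∈ Set.Icc (0:ℝ) T := ⟨le_rfl, le_trans ht.1 ht.2⟩
  have hzero : ∀ τ : ℝ, ∑ i ∈ Finset.Icc 1 N, Gi S N x m i τ = 0 := by
    intro τ
    have : ∑ i ∈ Finset.Icc 1 N, Gi S N x m i τ
        = (1 / (N:ℝ)) * ∑ i ∈ Finset.Icc 1 N, ∑ j ∈ Finset.Icc 1 N,
            m i τ * m j τ * S (x j τ - x i τ) := by
      simp [Gi, Finset.mul_sum]
    rw [this, antisym_double_sum _ _ (fun i j => ?_), mul_zero]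
    have hx : x j τ - x i τ = -(x i τ - x j τ) := by ring
    rw [hx, hodd]; ring
  calc ∑ i ∈ Finset.Icc 1 N, m i t
      = ∑ i ∈ Finset.Icc 1 N, (m i 0 + ∫ τ in (0:ℝ)..t, Gi S N x m i τ) :=
        Finset.sum_congr rfl fun i hi => m_eq hsol hi t ht
    _ = ∑ i ∈ Finset.Icc 1 N, m i 0
        + ∑ i ∈ Finset.Icc 1 N, ∫ τ in (0:ℝ)..t, Gi S N x m i τ := Finset.sum_add_distrib
    _ = ∑ i ∈ Finset.Icc 1 N, m i 0 := by
        rw [← intervalIntegral.integral_finset_sum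
          (fun i hi => Gi_intInt hS hsol hi h0T ht)]
        simp [hzero]

lemma Gi_abs_le (hSb : ∀ y, |S y| ≤ Ms) (hN : 1 ≤ N) {i : ℕ}
    (hi : i ∈ Finset.Icc 1 N) (u : ℝ)
    (hnn : ∀ j ∈ Finset.Icc 1 N, 0 ≤ m j u)
    (hsu : ∑ j ∈ Finset.Icc 1 N, m j u = N) :
    |Gi S N x m i u| ≤ Ms * m i u := by
  have hNpos : (0:ℝ) < N := by exact_mod_cast hN
  have hterm : ∀ j ∈ Finset.Icc 1 N,
      |m i u * m j u * S (x j u - x i u)| ≤ m i u * m j u * Ms := by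
    intro j hj
    rw [abs_mul, abs_mul, abs_of_nonneg (hnn i hi), abs_of_nonneg (hnn j hj)]
    exact mul_le_mul_of_nonneg_left (hSb _) (mul_nonneg (hnn i hi) (hnn j hj))
  have hin : (0:ℝ) ≤ 1 / (N:ℝ) := by positivity
  calc |Gi S N x m i u|
      = (1 / (N:ℝ)) * |∑ j ∈ Finset.Icc 1 N, m i u * m j u * S (x j u - x i u)| := by
        rw [Gi, abs_mul, abs_of_nonneg hin]
    _ ≤ (1 / (N:ℝ)) * ∑ j ∈ Finset.Icc 1 N, |m i u * m j u * S (x j u - x i u)| :=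
        mul_le_mul_of_nonneg_left (Finset.abs_sum_le_sum_abs _ _) hin
    _ ≤ (1 / (N:ℝ)) * ∑ j ∈ Finset.Icc 1 N, m i u * m j u * Ms :=
        mul_le_mul_of_nonneg_left (Finset.sum_le_sum hterm) hin
    _ = (1 / (N:ℝ)) * (m i u * Ms * ∑ j ∈ Finset.Icc 1 N, m j u) := by
        congr 1
        rw [Finset.mul_sum]
        exact Finset.sum_congr rfl fun j _ => by ring
    _ = Ms * m i u := by rw [hsu]; field_simp

end CoulombAux

namespace CoulombAux

open MeasureTheory Set intervalIntegral

variable {S : ℝ → ℝ} {N : ℕ} {T Ms : ℝ} {x m : ℕ → ℝ → ℝ}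

lemma m_pos (hS : Continuous S) (hodd : ∀ y, S (-y) = -S y) (hMs : 0 ≤ Ms)
    (hSb : ∀ y, |S y| ≤ Ms) (hN : 1 ≤ N) (hsol : IsCoulombSol S N T x m)
    (hpos0 : ∀ i ∈ Finset.Icc 1 N, 0 < m i 0)
    (hnorm : ∑ i ∈ Finset.Icc 1 N, m i 0 = (N : ℝ)) :
    ∀ i ∈ Finset.Icc 1 N, ∀ t ∈ Set.Icc (0:ℝ) T, 0 < m i t := by
  by_contra hcon
  push_neg at hcon
  obtain ⟨i1, hi1, t1, ht1, hle⟩ := hcon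
  -- the set of zeroes
  set Z : Set ℝ := ⋃ i ∈ Finset.Icc 1 N, (Set.Icc (0:ℝ) T ∩ (m i) ⁻¹' {0}) with hZ
  have hZsub : Z ⊆ Set.Icc (0:ℝ) T := by
    intro τ hτ
    simp only [hZ, Set.mem_iUnion] at hτ
    obtain ⟨i, hi, hτ⟩ := hτ
    exact hτ.1
  have hZc : IsClosed Z :=
    isClosed_biUnion_finset fun i hi =>
      (hsol i hi).2.1.preimage_isClosed_of_isClosed isClosed_Icc isClosed_singleton
  have hZmem : ∀ i ∈ Finset.Icc 1 N, ∀ τ ∈ Set.Icc (0:ℝ) T, m i τ = 0 → τ ∈ Z := by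
    intro i hi τ hτ hmτ
    simp only [hZ, Set.mem_iUnion]
    exact ⟨i, hi, hτ, hmτ⟩
  have hZne : Z.Nonempty := by
    rcases eq_or_lt_of_le hle with heq | hlt
    · exact ⟨t1, hZmem i1 hi1 t1 ht1 heq⟩
    · have hsub1 : Set.Icc (0:ℝ) t1 ⊆ Set.Icc 0 T := Set.Icc_subset_Icc le_rfl ht1.2
      have hiv := intermediate_value_Icc' ht1.1 ((hsol i1 hi1).2.1.mono hsub1)
      have h0 : (0:ℝ) ∈ Set.Icc (m i1 t1) (m i1 0) := ⟨hlt.le, (hpos0 i1 hi1).le⟩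
      obtain ⟨τ, hτmem, hτ0⟩ := hiv h0
      exact ⟨τ, hZmem i1 hi1 τ (hsub1 hτmem) hτ0⟩
  have hbdd : BddBelow Z := BddBelow.mono hZsub bddBelow_Icc
  set t0 := sInf Z with ht0def
  have ht0Z : t0 ∈ Z := hZc.csInf_mem hZne hbdd
  have ht0T : t0 ∈ Set.Icc (0:ℝ) T := hZsub ht0Z
  obtain ⟨i0, hi0, hmem⟩ : ∃ i ∈ Finset.Icc 1 N, t0 ∈ Set.Icc (0:ℝ) T ∩ (m i) ⁻¹' {0} := by
    have := ht0Z
    simp only [hZ, Set.mem_iUnion] at this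
    obtain ⟨i, hi, h⟩ := this
    exact ⟨i, hi, h⟩
  have hm0 : m i0 t0 = 0 := hmem.2
  have ht0pos : 0 < t0 := by
    rcases eq_or_lt_of_le ht0T.1 with h | h
    · exact absurd (h ▸ hm0) (by rw [← h] at hm0; exact absurd hm0.symm (hpos0 i0 hi0).ne)
    · exact h
  have hlow : ∀ τ ∈ Z, t0 ≤ τ := fun τ hτ => csInf_le hbdd hτ
  have hIccsub : Set.Icc (0:ℝ) t0 ⊆ Set.Icc 0 T := Set.Icc_subset_Icc le_rfl ht0T.2
  -- nonnegativity on [0, t0]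
  have hnonneg : ∀ j ∈ Finset.Icc 1 N, ∀ u ∈ Set.Icc (0:ℝ) t0, 0 ≤ m j u := by
    intro j hj u hu
    by_contra h
    push_neg at h
    have husub : Set.Icc (0:ℝ) u ⊆ Set.Icc 0 T :=
      Set.Icc_subset_Icc le_rfl ((hu.2.trans ht0T.2))
    have hiv := intermediate_value_Icc' hu.1 ((hsol j hj).2.1.mono husub)
    obtain ⟨τ, hτmem, hτ0⟩ := hiv ⟨h.le, (hpos0 j hj).le⟩
    have hτZ : τ ∈ Z := hZmem j hj τ (husub hτmem) hτ0
    have : τ = u := le_antisymm hτmem.2 (le_trans hu.2 (hlow τ hτZ))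
    rw [this] at hτ0
    exact absurd hτ0 h.ne
  -- mass conservation
  have hsum : ∀ u ∈ Set.Icc (0:ℝ) T, ∑ j ∈ Finset.Icc 1 N, m j u = (N:ℝ) := fun u hu => by
    rw [mass_conserved hS hodd hsol u hu, hnorm]
  -- continuity of the reversed weight
  have hmapsTo : ∀ τ ∈ Set.Icc (0:ℝ) t0, t0 - τ ∈ Set.Icc (0:ℝ) T := by
    intro τ hτ
    exact ⟨by linarith [hτ.2], by linarith [hτ.1, ht0T.2]⟩
  have hrevc : ContinuousOn (fun τ => m i0 (t0 - τ)) (Set.Icc 0 t0) :=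
    (hsol i0 hi0).2.1.comp ((continuous_const.sub continuous_id).continuousOn) hmapsTo
  -- derivative of the reversed weight
  have hderiv : ∀ τ ∈ Set.Ico (0:ℝ) t0,
      HasDerivWithinAt (fun σ => m i0 (t0 - σ)) (Gi S N x m i0 (t0 - τ) * (-1))
        (Set.Ici τ) τ := by
    intro τ hτ
    have hbpos : 0 < t0 - τ := by linarith [hτ.2]
    have hbt0 : t0 - τ ∈ Set.Icc (0:ℝ) t0 := ⟨hbpos.le, by linarith [hτ.1]⟩
    have hbT : t0 - τ ∈ Set.Icc (0:ℝ) T := hIccsub hbt0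
    have hsub' : Set.Icc (0:ℝ) (t0 - τ) ⊆ Set.Icc 0 T := Set.Icc_subset_Icc le_rfl hbT.2
    have hGint : IntervalIntegrable (Gi S N x m i0) volume 0 (t0 - τ) :=
      Gi_intInt hS hsol hi0 ⟨le_rfl, le_trans ht0T.1 ht0T.2⟩ hbT
    have hfilter : nhdsWithin (t0 - τ) (Set.Icc (0:ℝ) (t0 - τ))
        = nhdsWithin (t0 - τ) (Set.Iic (t0 - τ)) := nhdsWithin_Icc_eq_nhdsLE hbpos
    have hmeas : StronglyMeasurableAtFilter (Gi S N x m i0)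
        (nhdsWithin (t0 - τ) (Set.Iic (t0 - τ))) := by
      refine ⟨Set.Icc 0 (t0 - τ), ?_, ?_⟩
      · rw [← hfilter]; exact self_mem_nhdsWithin
      · exact ((Gi_contOn hS hsol hi0).mono hsub').aestronglyMeasurable measurableSet_Icc
    have hcw : ContinuousWithinAt (Gi S N x m i0) (Set.Iic (t0 - τ)) (t0 - τ) := by
      have h1 : ContinuousWithinAt (Gi S N x m i0) (Set.Icc 0 (t0 - τ)) (t0 - τ) :=
        ((Gi_contOn hS hsol hi0).mono hsub') _ ⟨hbpos.le, le_rfl⟩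
      rw [ContinuousWithinAt, hfilter] at h1
      exact h1
    have hFTC : HasDerivWithinAt (fun u => ∫ τ' in (0:ℝ)..u, Gi S N x m i0 τ')
        (Gi S N x m i0 (t0 - τ)) (Set.Iic (t0 - τ)) (t0 - τ) :=
      intervalIntegral.integral_hasDerivWithinAt_right hGint hmeas hcw
    have hFTC' : HasDerivWithinAt (fun u => m i0 0 + ∫ τ' in (0:ℝ)..u, Gi S N x m i0 τ')
        (Gi S N x m i0 (t0 - τ)) (Set.Iic (t0 - τ)) (t0 - τ) := hFTC.const_add _
    have heq : (m i0) =ᶠ[nhdsWithin (t0 - τ) (Set.Iic (t0 - τ))]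
        (fun u => m i0 0 + ∫ τ' in (0:ℝ)..u, Gi S N x m i0 τ') := by
      rw [← hfilter]
      refine Filter.eventuallyEq_of_mem self_mem_nhdsWithin fun u hu => ?_
      exact m_eq hsol hi0 u (hsub' hu)
    have hmd : HasDerivWithinAt (m i0) (Gi S N x m i0 (t0 - τ))
        (Set.Iic (t0 - τ)) (t0 - τ) :=
      hFTC'.congr_of_eventuallyEq heq (m_eq hsol hi0 _ hbT)
    have hneg : HasDerivWithinAt (fun σ : ℝ => t0 - σ) (-1) (Set.Ici τ) τ :=
      ((hasDerivAt_id τ).const_sub t0).hasDerivWithinAt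
    have hmaps : Set.MapsTo (fun σ : ℝ => t0 - σ) (Set.Ici τ) (Set.Iic (t0 - τ)) :=
      fun u hu => by simp only [Set.mem_Iic]; simp only [Set.mem_Ici] at hu; linarith
    exact hmd.comp τ hneg hmaps
  -- the bound on the derivative
  have hbound : ∀ τ ∈ Set.Ico (0:ℝ) t0,
      ‖Gi S N x m i0 (t0 - τ) * (-1)‖ ≤ Ms * ‖(fun σ => m i0 (t0 - σ)) τ‖ + 0 := by
    intro τ hτ
    have hbt0 : t0 - τ ∈ Set.Icc (0:ℝ) t0 := ⟨by linarith [hτ.2], by linarith [hτ.1]⟩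
    have hbT : t0 - τ ∈ Set.Icc (0:ℝ) T := hIccsub hbt0
    have hGb := Gi_abs_le (x := x) hSb hN hi0 (t0 - τ)
      (fun j hj => hnonneg j hj _ hbt0) (hsum _ hbT)
    have hmn : 0 ≤ m i0 (t0 - τ) := hnonneg i0 hi0 _ hbt0
    calc ‖Gi S N x m i0 (t0 - τ) * (-1)‖ = |Gi S N x m i0 (t0 - τ)| := by
          rw [Real.norm_eq_abs, abs_mul]; simp
      _ ≤ Ms * m i0 (t0 - τ) := hGb
      _ = Ms * ‖(fun σ => m i0 (t0 - σ)) τ‖ := by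
          rw [Real.norm_eq_abs, abs_of_nonneg hmn]
      _ ≤ Ms * ‖(fun σ => m i0 (t0 - σ)) τ‖ + 0 := by linarith
  -- Gronwall
  have h00 : ‖(fun τ => m i0 (t0 - τ)) 0‖ ≤ (0:ℝ) := by simp [hm0]
  have hgron := norm_le_gronwallBound_of_norm_deriv_right_le hrevc hderiv h00 hbound
    t0 ⟨ht0pos.le, le_rfl⟩
  rw [sub_self, sub_zero, gronwallBound_ε0_δ0] at hgron
  rw [Real.norm_eq_abs, abs_of_pos (hpos0 i0 hi0)] at hgron
  linarith [hpos0 i0 hi0]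

end CoulombAux

namespace CoulombAux

open MeasureTheory Set intervalIntegral

variable {S : ℝ → ℝ} {N : ℕ} {T Ms : ℝ} {x m : ℕ → ℝ → ℝ}

lemma x_lip (hsol : IsCoulombSol S N T x m) (hN : 1 ≤ N)
    (hpos : ∀ j ∈ Finset.Icc 1 N, ∀ u ∈ Set.Icc (0:ℝ) T, 0 < m j u)
    (hsum : ∀ u ∈ Set.Icc (0:ℝ) T, ∑ j ∈ Finset.Icc 1 N, m j u = (N:ℝ))
    {i : ℕ} (hi : i ∈ Finset.Icc 1 N) :
    ∀ s ∈ Set.Icc (0:ℝ) T, ∀ t ∈ Set.Icc (0:ℝ) T, |x i t - x i s| ≤ |t - s| := by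
  have hNpos : (0:ℝ) < N := by exact_mod_cast hN
  set f : ℝ → ℝ := fun τ =>
    (1 / (N : ℝ)) * ∑ j ∈ (Finset.Icc 1 N).erase i, m j τ * Real.sign (x j τ - x i τ)
    with hf
  have habs : ∀ τ ∈ Set.Icc (0:ℝ) T, |f τ| ≤ 1 := by
    intro τ hτ
    have h1 : |f τ| ≤ (1 / (N:ℝ)) * ∑ j ∈ (Finset.Icc 1 N).erase i,
        |m j τ * Real.sign (x j τ - x i τ)| := by
      rw [hf, abs_mul, abs_of_nonneg (by positivity : (0:ℝ) ≤ 1 / (N:ℝ))]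
      exact mul_le_mul_of_nonneg_left (Finset.abs_sum_le_sum_abs _ _) (by positivity)
    have h2 : ∀ j ∈ (Finset.Icc 1 N).erase i,
        |m j τ * Real.sign (x j τ - x i τ)| ≤ m j τ := by
      intro j hj
      have hj' := Finset.mem_of_mem_erase hj
      rw [abs_mul, abs_of_nonneg (hpos j hj' τ hτ).le]
      calc m j τ * |Real.sign (x j τ - x i τ)| ≤ m j τ * 1 :=
            mul_le_mul_of_nonneg_left (abs_realSign_le _) (hpos j hj' τ hτ).le
        _ = m j τ := mul_one _
    have h3 : ∑ j ∈ (Finset.Icc 1 N).erase i, m j τ ≤ ∑ j ∈ Finset.Icc 1 N, m j τ :=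
      Finset.sum_le_sum_of_subset_of_nonneg (Finset.erase_subset _ _)
        (fun j hj _ => (hpos j hj τ hτ).le)
    calc |f τ| ≤ (1 / (N:ℝ)) * ∑ j ∈ (Finset.Icc 1 N).erase i,
          |m j τ * Real.sign (x j τ - x i τ)| := h1
      _ ≤ (1 / (N:ℝ)) * ∑ j ∈ (Finset.Icc 1 N).erase i, m j τ :=
          mul_le_mul_of_nonneg_left (Finset.sum_le_sum h2) (by positivity)
      _ ≤ (1 / (N:ℝ)) * ∑ j ∈ Finset.Icc 1 N, m j τ :=
          mul_le_mul_of_nonneg_left h3 (by positivity)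
      _ = 1 := by rw [hsum τ hτ]; field_simp
  have hint : ∀ u ∈ Set.Icc (0:ℝ) T, IntervalIntegrable f volume 0 u := by
    intro u hu
    rw [intervalIntegrable_iff_integrableOn_Ioc_of_le hu.1]
    have hIoc : Set.Ioc (0:ℝ) u ⊆ Set.Icc 0 T := fun τ hτ => ⟨hτ.1.le, hτ.2.trans hu.2⟩
    have hmeasf : AEStronglyMeasurable f (volume.restrict (Set.Ioc 0 u)) := by
      refine AEMeasurable.aestronglyMeasurable (AEMeasurable.const_mul ?_ _)
      refine Finset.aemeasurable_fun_sum _ fun j hj => ?_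
      have hj' := Finset.mem_of_mem_erase hj
      have hm : AEMeasurable (m j) (volume.restrict (Set.Ioc 0 u)) :=
        ((hsol j hj').2.1.mono hIoc).aemeasurable measurableSet_Ioc
      have hx : AEMeasurable (fun τ => x j τ - x i τ) (volume.restrict (Set.Ioc 0 u)) :=
        (((hsol j hj').1.sub (hsol i hi).1).mono hIoc).aemeasurable measurableSet_Ioc
      exact hm.mul (measurable_realSign.comp_aemeasurable hx)
    refine Integrable.mono' (g := fun _ => (1:ℝ)) ?_ hmeasf ?_
    · exact integrableOn_const measure_Ioc_lt_top.ne
    · refine (ae_restrict_iff' measurableSet_Ioc).mpr (Filter.Eventually.of_forall fun τ hτ => ?_)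
      rw [Real.norm_eq_abs]
      exact habs τ (hIoc hτ)
  intro s hs t ht
  have heqx : ∀ u ∈ Set.Icc (0:ℝ) T, x i u = x i 0 + ∫ τ in (0:ℝ)..u, f τ :=
    (hsol i hi).2.2.1
  have hdiff : x i t - x i s = ∫ τ in s..t, f τ := by
    have h := intervalIntegral.integral_interval_sub_left (hint t ht) (hint s hs)
    rw [heqx t ht, heqx s hs, ← h]
    ring
  have hsub : Set.uIoc s t ⊆ Set.Icc (0:ℝ) T :=
    Set.uIoc_subset_uIcc.trans (Set.uIcc_subset_Icc hs ht)
  rw [hdiff]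
  calc |∫ τ in s..t, f τ| = ‖∫ τ in s..t, f τ‖ := (Real.norm_eq_abs _).symm
    _ ≤ 1 * |t - s| := intervalIntegral.norm_integral_le_of_norm_le_const
        (fun τ hτ => by rw [Real.norm_eq_abs]; exact habs τ (hsub hτ))
    _ = |t - s| := one_mul _

lemma m_diff_sum (hS : Continuous S) (hodd : ∀ y, S (-y) = -S y)
    (hSb : ∀ y, |S y| ≤ Ms) (hN : 1 ≤ N) (hsol : IsCoulombSol S N T x m)
    (hnng : ∀ j ∈ Finset.Icc 1 N, ∀ u ∈ Set.Icc (0:ℝ) T, 0 ≤ m j u)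
    (hsum : ∀ u ∈ Set.Icc (0:ℝ) T, ∑ j ∈ Finset.Icc 1 N, m j u = (N:ℝ)) :
    ∀ s ∈ Set.Icc (0:ℝ) T, ∀ t ∈ Set.Icc (0:ℝ) T, s ≤ t →
      ∑ k ∈ Finset.Icc 1 N, |m k t - m k s| ≤ Ms * N * (t - s) := by
  intro s hs t ht hst
  have h0T : (0:ℝ) ∈ Set.Icc (0:ℝ) T := ⟨le_rfl, le_trans hs.1 hs.2⟩
  have hIccsub : Set.Icc s t ⊆ Set.Icc (0:ℝ) T := Set.Icc_subset_Icc hs.1 ht.2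
  have huIcc : Set.uIcc s t ⊆ Set.Icc (0:ℝ) T := Set.uIcc_subset_Icc hs ht
  have hint2 : ∀ k ∈ Finset.Icc 1 N, IntervalIntegrable (fun τ => Ms * m k τ) volume s t :=
    fun k hk => (continuousOn_const.mul ((hsol k hk).2.1.mono huIcc)).intervalIntegrable
  have hIk : ∀ k ∈ Finset.Icc 1 N, |m k t - m k s| ≤ ∫ τ in s..t, Ms * m k τ := by
    intro k hk
    have h1 : m k t - m k s = ∫ τ in s..t, Gi S N x m k τ := by
      have h := intervalIntegral.integral_interval_sub_left
        (Gi_intInt hS hsol hk h0T ht) (Gi_intInt hS hsol hk h0T hs)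
      rw [m_eq hsol hk t ht, m_eq hsol hk s hs, ← h]
      ring
    have hGint : IntervalIntegrable (Gi S N x m k) volume s t :=
      ((Gi_contOn hS hsol hk).mono huIcc).intervalIntegrable
    have hGabsint : IntervalIntegrable (fun τ => |Gi S N x m k τ|) volume s t :=
      (((Gi_contOn hS hsol hk).mono huIcc).abs).intervalIntegrable
    rw [h1]
    calc |∫ τ in s..t, Gi S N x m k τ| ≤ ∫ τ in s..t, |Gi S N x m k τ| :=
          intervalIntegral.abs_integral_le_integral_abs hst
      _ ≤ ∫ τ in s..t, Ms * m k τ := by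
          refine intervalIntegral.integral_mono_on hst hGabsint (hint2 k hk) fun τ hτ => ?_
          exact Gi_abs_le (x := x) hSb hN hk τ
            (fun j hj => hnng j hj τ (hIccsub hτ)) (hsum τ (hIccsub hτ))
  calc ∑ k ∈ Finset.Icc 1 N, |m k t - m k s|
      ≤ ∑ k ∈ Finset.Icc 1 N, ∫ τ in s..t, Ms * m k τ := Finset.sum_le_sum hIk
    _ = ∫ τ in s..t, ∑ k ∈ Finset.Icc 1 N, Ms * m k τ :=
        (intervalIntegral.integral_finset_sum hint2).symm
    _ = ∫ τ in s..t, Ms * (N:ℝ) := by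
        refine intervalIntegral.integral_congr fun τ hτ => ?_
        rw [← Finset.mul_sum, hsum τ (huIcc hτ)]
    _ = Ms * N * (t - s) := by rw [intervalIntegral.integral_const]; simp [smul_eq_mul]; ring

end CoulombAux

open MeasureTheory Set

/-- Time equi-continuity of the empirical distribution functions in
`L¹(ℝ)`: there is `c > 0`, depending only on the sup norm bound `Ms` of `S`, the
initial spatial bound `X̄` and the horizon `T` (and not on `N`), such that
`‖F_N(t,·) − F_N(s,·)‖_{L¹} ≤ c |t − s|`. -/
theorem FN_time_L1_lipschitz
    (Ms Xbar T : ℝ) (hMs : 0 ≤ Ms) (hX : 0 ≤ Xbar) (hT : 0 < T) :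
    ∃ c > (0 : ℝ), ∀ S : ℝ → ℝ, Continuous S → (∀ y, S (-y) = -S y) →
      (∀ y, |S y| ≤ Ms) →
      ∀ N : ℕ, 1 ≤ N → ∀ x m : ℕ → ℝ → ℝ, IsCoulombSol S N T x m →
        (∀ i ∈ Finset.Icc 1 N, 0 < m i 0) →
        (1 / (N : ℝ)) * ∑ i ∈ Finset.Icc 1 N, m i 0 = 1 →
        (∀ i ∈ Finset.Icc 1 N, |x i 0| ≤ Xbar) →
        ∀ s ∈ Set.Icc (0 : ℝ) T, ∀ t ∈ Set.Icc (0 : ℝ) T,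
          (∫ y : ℝ, |FNemp N x m t y - FNemp N x m s y|) ≤ c * |t - s| := by
  classical
  set R : ℝ := Xbar + T with hR
  have hRpos : 0 < R := by positivity
  refine ⟨1 + 2 * R * Ms, by positivity, ?_⟩
  intro S hS hodd hSb N hN x m hsol hpos0 hnorm0 hX0
  have hNpos : (0:ℝ) < N := by exact_mod_cast hN
  have hnorm : ∑ i ∈ Finset.Icc 1 N, m i 0 = (N:ℝ) := by
    have h := congrArg (fun z => (N:ℝ) * z) hnorm0
    field_simp at h
    linarith
  have hpos : ∀ i ∈ Finset.Icc 1 N, ∀ u ∈ Set.Icc (0:ℝ) T, 0 < m i u :=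
    CoulombAux.m_pos hS hodd hMs hSb hN hsol hpos0 hnorm
  have hnng : ∀ i ∈ Finset.Icc 1 N, ∀ u ∈ Set.Icc (0:ℝ) T, 0 ≤ m i u :=
    fun i hi u hu => (hpos i hi u hu).le
  have hsum : ∀ u ∈ Set.Icc (0:ℝ) T, ∑ j ∈ Finset.Icc 1 N, m j u = (N:ℝ) :=
    fun u hu => (CoulombAux.mass_conserved hS hodd hsol u hu).trans hnorm
  have hxbd : ∀ k ∈ Finset.Icc 1 N, ∀ u ∈ Set.Icc (0:ℝ) T, |x k u| ≤ R := by
    intro k hk u hu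
    have h1 := CoulombAux.x_lip hsol hN hpos hsum hk 0 ⟨le_rfl, hT.le⟩ u hu
    rw [sub_zero] at h1
    have h2 : |u| = u := abs_of_nonneg hu.1
    calc |x k u| = |x k 0 + (x k u - x k 0)| := by ring_nf
      _ ≤ |x k 0| + |x k u - x k 0| := abs_add_le _ _
      _ ≤ Xbar + T := add_le_add (hX0 k hk) (by rw [h2] at h1; linarith [hu.2])
  suffices key : ∀ s ∈ Set.Icc (0:ℝ) T, ∀ t ∈ Set.Icc (0:ℝ) T, s ≤ t →
      (∫ y : ℝ, |FNemp N x m t y - FNemp N x m s y|) ≤ (1 + 2 * R * Ms) * |t - s| by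
    intro s hs t ht
    rcases le_total s t with h | h
    · exact key s hs t ht h
    · have hk := key t ht s hs h
      calc (∫ y : ℝ, |FNemp N x m t y - FNemp N x m s y|)
          = ∫ y : ℝ, |FNemp N x m s y - FNemp N x m t y| := by
            simp_rw [abs_sub_comm]
        _ ≤ (1 + 2 * R * Ms) * |s - t| := hk
        _ = (1 + 2 * R * Ms) * |t - s| := by rw [abs_sub_comm]
  intro s hs t ht hst
  have hts : |t - s| = t - s := abs_of_nonneg (sub_nonneg.mpr hst)
  have hmd := CoulombAux.m_diff_sum hS hodd hSb hN hsol hnng hsum s hs t ht hst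
  -- the dominating function
  set B1 : ℝ → ℝ := fun y => (1/(N:ℝ)) * ∑ k ∈ Finset.Icc 1 N,
    m k t * Set.indicator (Set.Ico (x k t ⊓ x k s) (x k t ⊔ x k s)) (fun _ => (1:ℝ)) y
    with hB1
  set B2 : ℝ → ℝ := fun y =>
    Set.indicator (Set.Icc (-R) R) (fun _ => Ms * (t - s)) y with hB2
  -- pointwise bound
  have hptwise : ∀ y : ℝ, |FNemp N x m t y - FNemp N x m s y| ≤ B1 y + B2 y := by
    intro y
    have hsplit : FNemp N x m t y - FNemp N x m s y
        = (1/(N:ℝ)) * ∑ k ∈ Finset.Icc 1 N,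
            m k t * ((if 0 ≤ y - x k t then (1:ℝ) else 0)
              - (if 0 ≤ y - x k s then (1:ℝ) else 0))
          + (1/(N:ℝ)) * ∑ k ∈ Finset.Icc 1 N,
            (m k t - m k s) * (if 0 ≤ y - x k s then (1:ℝ) else 0) := by
      simp only [FNemp]
      rw [show ∀ a b c : ℝ, (-(1/2) + (1/(N:ℝ)) * a) - (-(1/2) + (1/(N:ℝ)) * b)
        = (1/(N:ℝ)) * (a - b) from fun a b c => by ring]
      · rw [← Finset.sum_sub_distrib, ← mul_add, ← Finset.sum_add_distrib]
        congr 1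
        exact Finset.sum_congr rfl fun k _ => by ring
      · exact 0
    rw [hsplit]
    refine (abs_add_le _ _).trans (add_le_add ?_ ?_)
    · -- first part
      rw [hB1, abs_mul, abs_of_nonneg (by positivity : (0:ℝ) ≤ 1/(N:ℝ))]
      refine mul_le_mul_of_nonneg_left ?_ (by positivity)
      refine (Finset.abs_sum_le_sum_abs _ _).trans (Finset.sum_le_sum fun k hk => ?_)
      rw [abs_mul, abs_of_nonneg (hnng k hk t ht), CoulombAux.abs_Hdiff]
    · -- second part
      by_cases hy : y ∈ Set.Icc (-R) R
      · rw [hB2]; simp only [Set.indicator_of_mem hy]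
        have h1 : |(1/(N:ℝ)) * ∑ k ∈ Finset.Icc 1 N,
            (m k t - m k s) * (if 0 ≤ y - x k s then (1:ℝ) else 0)|
            ≤ (1/(N:ℝ)) * ∑ k ∈ Finset.Icc 1 N, |m k t - m k s| := by
          rw [abs_mul, abs_of_nonneg (by positivity : (0:ℝ) ≤ 1/(N:ℝ))]
          refine mul_le_mul_of_nonneg_left
            ((Finset.abs_sum_le_sum_abs _ _).trans
              (Finset.sum_le_sum fun k hk => ?_)) (by positivity)
          rw [abs_mul]
          have : |if 0 ≤ y - x k s then (1:ℝ) else 0| ≤ 1 := by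
            split_ifs <;> norm_num
          calc |m k t - m k s| * |if 0 ≤ y - x k s then (1:ℝ) else 0|
              ≤ |m k t - m k s| * 1 :=
                mul_le_mul_of_nonneg_left this (abs_nonneg _)
            _ = |m k t - m k s| := mul_one _
        refine h1.trans ?_
        calc (1/(N:ℝ)) * ∑ k ∈ Finset.Icc 1 N, |m k t - m k s|
            ≤ (1/(N:ℝ)) * (Ms * N * (t - s)) :=
              mul_le_mul_of_nonneg_left hmd (by positivity)
          _ = Ms * (t - s) := by field_simp
      · rw [hB2]; simp only [Set.indicator_of_notMem hy]
        have hzero : ∑ k ∈ Finset.Icc 1 N,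
            (m k t - m k s) * (if 0 ≤ y - x k s then (1:ℝ) else 0) = 0 := by
          rw [Set.mem_Icc] at hy
          push_neg at hy
          rcases lt_or_ge y (-R) with hyl | hyl
          · refine Finset.sum_eq_zero fun k hk => ?_
            rw [if_neg, mul_zero]
            have := (abs_le.mp (hxbd k hk s hs)).1
            intro hcon
            linarith
          · have hyr := hy hyl
            have hone : ∀ k ∈ Finset.Icc 1 N,
                (m k t - m k s) * (if 0 ≤ y - x k s then (1:ℝ) else 0)
                  = m k t - m k s := by
              intro k hk
              rw [if_pos, mul_one]
              have := (abs_le.mp (hxbd k hk s hs)).2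
              linarith
            rw [Finset.sum_congr rfl hone, Finset.sum_sub_distrib,
              hsum t ht, hsum s hs, sub_self]
        rw [hzero, mul_zero, abs_zero]
  -- integrability of the dominating function
  have hind_int : ∀ k ∈ Finset.Icc 1 N, Integrable (fun y =>
      m k t * Set.indicator (Set.Ico (x k t ⊓ x k s) (x k t ⊔ x k s))
        (fun _ => (1:ℝ)) y) volume := by
    intro k hk
    exact ((integrable_indicator_iff measurableSet_Ico).mpr
      (integrableOn_const measure_Ico_lt_top.ne)).const_mul _
  have hB1int : Integrable B1 volume := by
    rw [hB1]
    exact (integrable_finset_sum _ hind_int).const_mul _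
  have hB2int : Integrable B2 volume := by
    rw [hB2]
    exact (integrable_indicator_iff measurableSet_Icc).mpr
      (integrableOn_const measure_Icc_lt_top.ne)
  have hmono := integral_mono_of_nonneg
    (Filter.Eventually.of_forall fun y => abs_nonneg _)
    (hB1int.add hB2int)
    (Filter.Eventually.of_forall hptwise)
  refine hmono.trans ?_
  simp only [Pi.add_apply]
  rw [integral_add hB1int hB2int]
  -- compute the two integrals
  have hI1 : ∫ y, B1 y = (1/(N:ℝ)) * ∑ k ∈ Finset.Icc 1 N, m k t * |x k t - x k s| := by
    rw [hB1, MeasureTheory.integral_const_mul, integral_finset_sum _ hind_int]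
    congr 1
    refine Finset.sum_congr rfl fun k hk => ?_
    rw [MeasureTheory.integral_const_mul, MeasureTheory.integral_indicator measurableSet_Ico,
      setIntegral_const, Real.volume_real_Ico_of_le inf_le_sup, smul_eq_mul, mul_one,
      max_sub_min_eq_abs, abs_sub_comm]
  have hI2 : ∫ y, B2 y = (2*R) * (Ms * (t - s)) := by
    rw [hB2, MeasureTheory.integral_indicator measurableSet_Icc,
      setIntegral_const, Real.volume_real_Icc_of_le (by linarith : -R ≤ R), smul_eq_mul]
    ring
  rw [hI1, hI2, hts]
  have hsum1 : ∑ k ∈ Finset.Icc 1 N, m k t * |x k t - x k s|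
      ≤ ∑ k ∈ Finset.Icc 1 N, m k t * (t - s) := by
    refine Finset.sum_le_sum fun k hk => ?_
    refine mul_le_mul_of_nonneg_left ?_ (hnng k hk t ht)
    have := CoulombAux.x_lip hsol hN hpos hsum hk s hs t ht
    rwa [hts] at this
  have hsum2 : ∑ k ∈ Finset.Icc 1 N, m k t * (t - s) = (N:ℝ) * (t - s) := by
    rw [← Finset.sum_mul, hsum t ht]
  calc (1/(N:ℝ)) * ∑ k ∈ Finset.Icc 1 N, m k t * |x k t - x k s| + 2*R*(Ms*(t-s))
      ≤ (1/(N:ℝ)) * ((N:ℝ) * (t - s)) + 2*R*(Ms*(t-s)) := by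
        refine add_le_add (mul_le_mul_of_nonneg_left ?_ (by positivity)) le_rfl
        rw [← hsum2]; exact hsum1
    _ = (1 + 2*R*Ms) * (t - s) := by field_simp
end

section
/- Let A : ℝ → ℝ be continuously differentiable, let F_L, F_R, s ∈ ℝ with F_L < F_R, and suppose the Rankine–Hugoniot condition (A(F_L) − A(F_R))/(F_L − F_R) = s holds together with the Oleinik condition: (A(θ) − A(F_L))/(θ − F_L) ≥ s for every θ ∈ (F_L, F_R). Let η : ℝ → ℝ be convex and continuously differentiable with Lipschitz derivative, and define ψ(y) := ∫_{F_L}^{y} η'(z)·A'(z) dz. Then ψ(F_L) − ψ(F_R) − s·(η(F_L) − η(F_R)) ≥ 0. -/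
/-!
With `g t = A t - A F_L - s (t - F_L)`, a primitive of `A' - s`, Rankine–Hugoniot says
`g F_R = 0` and Oleinik says `g ≥ 0` on `[F_L, F_R]`. The dissipation equals
`∫_{F_L}^{F_R} (η' F_R - η' z) g'(z) dz`, which, integrating by parts against the Stieltjes
measure `dη'`, is `∫ g dη' ≥ 0`: convexity makes `η'` nondecreasing, so `dη'` is a positive measure.
-/

open intervalIntegral
open MeasureTheory Set

theorem StieltjesFunction.setIntegral_Ioc_sub_mul_eq (F : StieltjesFunction ℝ) {h : ℝ → ℝ}
    {a b : ℝ} (hh : IntegrableOn h (Ioc a b)) :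
    ∫ z in Ioc a b, (F b - F z) * h z = ∫ t in Ioc a b, (∫ z in a..t, h z) ∂F.measure := by
  have : IsFiniteMeasure (F.measure.restrict (Ioc a b)) := ⟨by simp [F.measure_Ioc]⟩
  -- Fubini for `(z, t) ↦ 1_{z < t} h z`, as `F b - F z` is the `F`-measure of `Ioc z b`
  let G : ℝ → ℝ → ℝ := fun z t => (Ioi z).indicator (fun _ => h z) t
  have hint : Integrable (Function.uncurry G)
      ((volume.restrict (Ioc a b)).prod (F.measure.restrict (Ioc a b))) := by
    have hG : Function.uncurry G = {p : ℝ × ℝ | p.1 < p.2}.indicator fun p => h p.1 := by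
      ext ⟨z, t⟩; simp [G, indicator_apply]
    rw [hG]
    exact (hh.comp_fst _).indicator (measurableSet_lt measurable_fst measurable_snd)
  convert integral_integral_swap hint using 1
  · refine setIntegral_congr_fun measurableSet_Ioc fun z hz => ?_
    have hIoi : Ioi z ∩ Ioc a b = Ioc z b := by
      ext x; simp only [mem_inter_iff, mem_Ioi, mem_Ioc]
      exact ⟨fun h => ⟨h.1, h.2.2⟩, fun h => ⟨h.1, hz.1.trans h.1, h.2⟩⟩
    rw [integral_indicator_const _ _root_.measurableSet_Ioi,
      measureReal_restrict_apply _root_.measurableSet_Ioi, hIoi, measureReal_def, F.measure_Ioc,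
      ENNReal.toReal_ofReal (sub_nonneg.2 (F.mono hz.2)), smul_eq_mul]
  · refine setIntegral_congr_fun measurableSet_Ioc fun t ht => ?_
    have hIio : Iio t ∩ Ioc a b = Ioo a t := by
      ext x; simp only [mem_inter_iff, mem_Iio, mem_Ioc, mem_Ioo]
      exact ⟨fun h => ⟨h.2.1, h.1⟩, fun h => ⟨h.2, h.1, h.2.le.trans ht.2⟩⟩
    have hG : (fun z => G z t) = (Iio t).indicator h := by
      ext z; simp [G, indicator_apply]
    rw [hG, MeasureTheory.integral_indicator _root_.measurableSet_Iio,
      Measure.restrict_restrict _root_.measurableSet_Iio, hIio, ← integral_Ioc_eq_integral_Ioo,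
      integral_of_le ht.1.le]

theorem StieltjesFunction.setIntegral_Ioc_sub_mul_nonneg (F : StieltjesFunction ℝ) {h : ℝ → ℝ}
    {a b : ℝ} (hh : IntegrableOn h (Ioc a b)) (hprim : ∀ t ∈ Ioc a b, 0 ≤ ∫ z in a..t, h z) :
    0 ≤ ∫ z in Ioc a b, (F b - F z) * h z := by
  rw [F.setIntegral_Ioc_sub_mul_eq hh]
  exact setIntegral_nonneg measurableSet_Ioc hprim

noncomputable def ConvexOn.derivStieltjesFunction {f : ℝ → ℝ} (hconv : ConvexOn ℝ univ f)
    (hf : ContDiff ℝ 1 f) : StieltjesFunction ℝ where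
  toFun := deriv f
  mono' := monotoneOn_univ.mp <| hconv.monotoneOn_deriv fun x _ => hf.differentiable one_ne_zero x
  right_continuous' _ := (hf.continuous_deriv le_rfl).continuousWithinAt

theorem integral_deriv_sub_const {f : ℝ → ℝ} (hf : ContDiff ℝ 1 f) (a b c : ℝ) :
    ∫ z in a..b, (deriv f z - c) = f b - f a - c * (b - a) := by
  have hf' := (hf.continuous_deriv le_rfl).intervalIntegrable (μ := volume) a b
  rw [integral_sub hf' intervalIntegrable_const,
    integral_deriv_eq_sub (fun x _ => hf.differentiable one_ne_zero x) hf',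
    intervalIntegral.integral_const, smul_eq_mul, mul_comm]

theorem integral_deriv_sub_mul_deriv_sub {f g : ℝ → ℝ} (hf : ContDiff ℝ 1 f) (hg : ContDiff ℝ 1 g)
    (a b c : ℝ) :
    ∫ z in a..b, (deriv g b - deriv g z) * (deriv f z - c) =
      deriv g b * (f b - f a - c * (b - a)) - (∫ z in a..b, deriv g z * deriv f z)
        + c * (g b - g a) := by
  have hf' := hf.continuous_deriv le_rfl
  have hg' := hg.continuous_deriv le_rfl
  have hprimitive : ∀ z, HasDerivAt
      (fun z => deriv g b * (f z - c * z) - (∫ y in a..z, deriv g y * deriv f y) + c * g z)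
      ((deriv g b - deriv g z) * (deriv f z - c)) z := fun z =>
    ((((hf.differentiable one_ne_zero z).hasDerivAt.sub
      ((hasDerivAt_id' z).const_mul c)).const_mul (deriv g b)).sub
      ((hg'.mul hf').integral_hasStrictDerivAt a z).hasDerivAt |>.add
      ((hg.differentiable one_ne_zero z).hasDerivAt.const_mul c)).congr_deriv
      (by simp only [Pi.mul_apply]; ring)
  rw [integral_eq_sub_of_hasDerivAt (fun z _ => hprimitive z)
    (((continuous_const.sub hg').mul (hf'.sub continuous_const)).intervalIntegrable _ _),
    integral_same]
  ring

theorem entropy_dissipation_across_shock_general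
    (A : ℝ → ℝ) (hA : ContDiff ℝ 1 A)
    (FL FR s : ℝ) (hLR : FL < FR)
    (hRH : (A FL - A FR) / (FL - FR) = s)
    (hOleinik : ∀ θ ∈ Set.Ioo FL FR, s ≤ (A θ - A FL) / (θ - FL))
    (η : ℝ → ℝ) (hηconv : ConvexOn ℝ Set.univ η) (hη : ContDiff ℝ 1 η)
    (ψ : ℝ → ℝ) (hψ : ∀ y, ψ y = ∫ z in FL..y, deriv η z * deriv A z) :
    0 ≤ ψ FL - ψ FR - s * (η FL - η FR) := by
  have hRH' : A FR - A FL - s * (FR - FL) = 0 := by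
    rw [div_eq_iff (sub_ne_zero.2 hLR.ne)] at hRH
    linarith
  have hchord : ∀ t ∈ Ioc FL FR, 0 ≤ ∫ z in FL..t, (deriv A z - s) := by
    rintro t ⟨hFLt, htFR⟩
    rw [integral_deriv_sub_const hA]
    rcases htFR.eq_or_lt with rfl | htFR
    · exact hRH'.ge
    · have := (le_div_iff₀ (sub_pos.2 hFLt)).1 (hOleinik t ⟨hFLt, htFR⟩)
      linarith
  have hdissip : 0 ≤ ∫ z in FL..FR, (deriv η FR - deriv η z) * (deriv A z - s) := by
    rw [integral_of_le hLR.le]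
    exact (hηconv.derivStieltjesFunction hη).setIntegral_Ioc_sub_mul_nonneg
      ((hA.continuous_deriv le_rfl).sub continuous_const).integrableOn_Ioc hchord
  rw [integral_deriv_sub_mul_deriv_sub hA hη, hRH'] at hdissip
  rw [hψ, hψ, integral_same]
  linarith

/-- Across a shock `(F_L, F_R)` with speed `s` satisfying the
Rankine–Hugoniot and Oleinik conditions, every convex `C^{1,1}` entropy `η` with
associated entropy flux `ψ` (`ψ' = η' A'`) satisfies
`ψ(F_L) − ψ(F_R) − s(η(F_L) − η(F_R)) ≥ 0`. -/
theorem entropy_dissipation_across_shock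
    (A : ℝ → ℝ) (hA : ContDiff ℝ 1 A)
    (FL FR s : ℝ) (hLR : FL < FR)
    (hRH : (A FL - A FR) / (FL - FR) = s)
    (hOleinik : ∀ θ ∈ Set.Ioo FL FR, s ≤ (A θ - A FL) / (θ - FL))
    (η : ℝ → ℝ) (hηconv : ConvexOn ℝ Set.univ η) (hη : ContDiff ℝ 1 η)
    (K : NNReal) (hηLip : LipschitzWith K (deriv η))
    (ψ : ℝ → ℝ) (hψ : ∀ y, ψ y = ∫ z in FL..y, deriv η z * deriv A z) :
    0 ≤ ψ FL - ψ FR - s * (η FL - η FR) :=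
  entropy_dissipation_across_shock_general A hA FL FR s hLR hRH hOleinik η hηconv hη ψ hψ
end
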